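/- arXiv:2604.15080 — 11 statements merged into one kernel-verified Lean document; each statement's English description precedes it below -/
import Mathlib

section
/- Under the construction setup with 0 ≤ r ≤ 𝔫, the r² polynomials g^i f^j for 0 ≤ i, j ≤ r−1 are linearly independent over F; moreover, their evaluation vectors on the 𝔫² points of Z_f ⊕ Z_g are linearly independent over F, so the evaluation code of span_F(B_{r²}) on Z_f ⊕ Z_g has dimension exactly r². -/
/-! For `β ∈ Z_f` and `γ ∈ Z_g`, additivity of `f` gives `f(β + γ) = f(γ) = γ` and
`g(β + γ) = β`, so `g^i f^j` takes the value `β^i γ^j` at `β + γ`. The evaluation vectors of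
`B_{r²}` are therefore the monomials `β^i γ^j` (`i, j < r`) on the grid `Z_f × Z_g`. Both sides
of the grid have `𝔫 ≥ r` points, since `f' = a₀` and `g' = 1 - a₀` are nonzero constants, and a
polynomial of degree `< r` in each variable vanishing on such a grid is zero (Vandermonde, once
in each variable). -/

open Polynomial
open scoped Classical

/-- The point set `Z_f ⊕ Z_g = {β + γ : β ∈ Z_f, γ ∈ Z_g}`. -/
noncomputable def rootSumSet {F : Type*} [Field F] (f g : F[X]) : Finset F :=
  (f.roots.toFinset ×ˢ g.roots.toFinset).image fun p => p.1 + p.2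

/-- The set `B_{r²} = {g^i f^j : 0 ≤ i, j ≤ r-1}` of polynomials. -/
def Bset {F : Type*} [Field F] (f g : F[X]) (r : ℕ) : Set F[X] :=
  {w | ∃ i j : ℕ, i < r ∧ j < r ∧ w = g ^ i * f ^ j}

/-- The linear evaluation map `F[X] → (S → F)` on a finite set `S` of points. -/
noncomputable def evalOn {F : Type*} [Field F] (S : Finset F) : F[X] →ₗ[F] (↥S → F) :=
  LinearMap.pi fun α => Polynomial.leval (α : F)

namespace Polynomial

variable {R : Type*} [CommSemiring R]

def IsLinearized (q : ℕ) (f : R[X]) : Prop :=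
  ∀ m ∈ f.support, ∃ i : ℕ, m = q ^ i

theorem IsLinearized.of_pow {q e : ℕ} {f : R[X]} (hf : f.IsLinearized (q ^ e)) :
    f.IsLinearized q := fun m hm => by
  obtain ⟨i, rfl⟩ := hf m hm
  exact ⟨e * i, (pow_mul q e i).symm⟩

theorem IsLinearized.eval_add {p : ℕ} [ExpChar R p] {f : R[X]} (hf : f.IsLinearized p)
    (a b : R) : f.eval (a + b) = f.eval a + f.eval b := by
  simp only [eval_eq_sum, Polynomial.sum_def, ← Finset.sum_add_distrib]
  refine Finset.sum_congr rfl fun m hm => ?_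
  obtain ⟨i, rfl⟩ := hf m hm
  rw [add_pow_expChar_pow, mul_add]

theorem IsLinearized.derivative_eq {p : ℕ} [CharP R p] {f : R[X]} (hf : f.IsLinearized p) :
    derivative f = C (f.coeff 1) := by
  ext n
  rw [coeff_derivative, coeff_C]
  rcases n with _ | n
  · simp
  by_cases hn : n + 2 ∈ f.support
  · obtain ⟨i, hi⟩ := hf _ hn
    have hi0 : i ≠ 0 := by rintro rfl; simp at hi
    have hcast : ((n + 1 : ℕ) : R) + 1 = 0 := by
      exact_mod_cast (CharP.cast_eq_zero_iff R p _).2 (hi ▸ dvd_pow_self p hi0)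
    rw [hcast, mul_zero, if_neg n.succ_ne_zero]
  · simp [notMem_support_iff.1 hn]

theorem eval_X_sub_pow_mul_pow_add_of_isRoot {R : Type*} [CommRing R] {f : R[X]}
    (hadd : ∀ a b, f.eval (a + b) = f.eval a + f.eval b) {β γ : R} (hβ : f.IsRoot β)
    (hγ : (X - f).IsRoot γ) (i j : ℕ) :
    ((X - f) ^ i * f ^ j).eval (β + γ) = β ^ i * γ ^ j := by
  have hfγ : f.eval γ = γ := by
    have := hγ.eq_zero
    rw [eval_sub, eval_X, sub_eq_zero] at this
    exact this.symm
  have hf : f.eval (β + γ) = γ := by rw [hadd, hβ.eq_zero, hfγ, zero_add]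
  simp only [eval_mul, eval_pow, eval_sub, eval_X, hf, add_sub_cancel_right]

section Field

variable {F : Type*} [Field F]

theorem separable_of_derivative_eq_C {f : F[X]} {a : F} (ha : a ≠ 0)
    (h : derivative f = C a) : f.Separable :=
  ⟨0, C a⁻¹, by rw [h, zero_mul, zero_add, ← C_mul, inv_mul_cancel₀ ha, C_1]⟩

theorem Separable.card_roots_toFinset {f : F[X]} (hsep : f.Separable) (hs : f.Splits) :
    f.roots.toFinset.card = f.natDegree := by
  rw [Multiset.toFinset_card_of_nodup (nodup_roots hsep), ← hs.natDegree_eq_card_roots]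

end Field

end Polynomial

section Vandermonde

open Matrix

variable {F : Type*} [Field F]

theorem Finset.eq_zero_of_forall_sum_mul_pow_eq_zero {s : Finset F} {n : ℕ} (hn : n ≤ s.card)
    {c : Fin n → F} (h : ∀ a ∈ s, ∑ i, c i * a ^ (i : ℕ) = 0) : c = 0 := by
  let v : Fin n ↪ F := ((Fin.castLEEmb hn).trans s.equivFin.symm.toEmbedding).trans
    (Function.Embedding.subtype _)
  have hv : vandermonde v *ᵥ c = 0 := funext fun k => by
    simpa [mulVec, dotProduct, mul_comm] using h (v k) (by simp [v])
  exact eq_zero_of_mulVec_eq_zero (det_vandermonde_ne_zero_iff.2 v.injective) hv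

theorem Finset.eq_zero_of_forall_sum_mul_pow_mul_pow_eq_zero {s t : Finset F} {m n : ℕ}
    (hm : m ≤ s.card) (hn : n ≤ t.card) {c : Fin m × Fin n → F}
    (h : ∀ β ∈ s, ∀ γ ∈ t, ∑ ij, c ij * (β ^ (ij.1 : ℕ) * γ ^ (ij.2 : ℕ)) = 0) : c = 0 := by
  have hrow : ∀ γ ∈ t, ∀ i, ∑ j, c (i, j) * γ ^ (j : ℕ) = 0 := fun γ hγ =>
    congrFun <| s.eq_zero_of_forall_sum_mul_pow_eq_zero hm fun β hβ => by
      rw [← h β hβ γ hγ, Fintype.sum_prod_type]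
      refine Finset.sum_congr rfl fun i _ => ?_
      rw [Finset.sum_mul]
      exact Finset.sum_congr rfl fun j _ => by ring
  ext ⟨i, j⟩
  exact congrFun (t.eq_zero_of_forall_sum_mul_pow_eq_zero hn fun γ hγ => hrow γ hγ i) j

end Vandermonde

section EvaluationCode

variable {F : Type*} [Field F]

theorem linearIndependent_evalOn_rootSumSet {f g : F[X]} {r : ℕ}
    (hf : r ≤ f.roots.toFinset.card) (hg : r ≤ g.roots.toFinset.card)
    (heval : ∀ β ∈ f.roots, ∀ γ ∈ g.roots, ∀ i j : ℕ,
      (g ^ i * f ^ j).eval (β + γ) = β ^ i * γ ^ j) :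
    LinearIndependent F
      (fun ij : Fin r × Fin r => evalOn (rootSumSet f g) (g ^ (ij.1 : ℕ) * f ^ (ij.2 : ℕ))) := by
  rw [Fintype.linearIndependent_iff]
  intro c hc
  refine congrFun (Finset.eq_zero_of_forall_sum_mul_pow_mul_pow_eq_zero hf hg fun β hβ γ hγ => ?_)
  have hmem : β + γ ∈ rootSumSet f g :=
    Finset.mem_image.2 ⟨(β, γ), Finset.mem_product.2 ⟨hβ, hγ⟩, rfl⟩
  have hcomp := congrFun hc ⟨β + γ, hmem⟩
  simp only [Finset.sum_apply, Pi.smul_apply, Pi.zero_apply, smul_eq_mul, evalOn,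
    LinearMap.pi_apply, leval_apply] at hcomp
  rw [← hcomp]
  exact Finset.sum_congr rfl fun ij _ => by
    rw [heval β (Multiset.mem_toFinset.1 hβ) γ (Multiset.mem_toFinset.1 hγ)]

theorem Bset_eq_range (f g : F[X]) (r : ℕ) :
    Bset f g r = Set.range fun ij : Fin r × Fin r => g ^ (ij.1 : ℕ) * f ^ (ij.2 : ℕ) := by
  ext w
  constructor
  · rintro ⟨i, j, hi, hj, rfl⟩
    exact ⟨(⟨i, hi⟩, ⟨j, hj⟩), rfl⟩
  · rintro ⟨⟨i, j⟩, rfl⟩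
    exact ⟨i, j, i.isLt, j.isLt, rfl⟩

theorem finrank_map_evalOn_span_Bset {f g : F[X]} {r : ℕ} {S : Finset F}
    (h : LinearIndependent F
      (fun ij : Fin r × Fin r => evalOn S (g ^ (ij.1 : ℕ) * f ^ (ij.2 : ℕ)))) :
    Module.finrank F ↥(Submodule.map (evalOn S) (Submodule.span F (Bset f g r))) = r ^ 2 := by
  rw [Bset_eq_range, Submodule.map_span, ← Set.range_comp]
  exact (finrank_span_eq_card h).trans (by rw [Fintype.card_prod, Fintype.card_fin, sq])

end EvaluationCode

theorem stmt_2_general (p e : ℕ) (hp : p.Prime)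
    (F : Type*) [Field F] [CharP F p]
    (f : F[X])
    (hflin : ∀ m ∈ f.support, ∃ i : ℕ, m = (p ^ e) ^ i)
    (hdeg : 1 < f.natDegree)
    (ha0 : f.coeff 1 ≠ 0) (ha1 : f.coeff 1 ≠ 1)
    (g : F[X]) (hg : g = X - f)
    (hfs : f.Splits) (hgs : g.Splits)
    (r : ℕ) (hrn : r ≤ f.natDegree) :
    LinearIndependent F
      (fun ij : Fin r × Fin r => (g ^ (ij.1 : ℕ) * f ^ (ij.2 : ℕ) : F[X])) ∧
    LinearIndependent F
      (fun ij : Fin r × Fin r =>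
        evalOn (rootSumSet f g) (g ^ (ij.1 : ℕ) * f ^ (ij.2 : ℕ))) ∧
    Module.finrank F
      ↥(Submodule.map (evalOn (rootSumSet f g)) (Submodule.span F (Bset f g r))) = r ^ 2 := by
  have : Fact p.Prime := ⟨hp⟩
  have hlin : f.IsLinearized p := IsLinearized.of_pow hflin
  have hderivg : derivative g = C (1 - f.coeff 1) := by
    rw [hg, derivative_sub, derivative_X, hlin.derivative_eq, C_sub, C_1]
  have hsepf := separable_of_derivative_eq_C ha0 hlin.derivative_eq
  have hsepg := separable_of_derivative_eq_C (sub_ne_zero.2 ha1.symm) hderivg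
  have hdegg : g.natDegree = f.natDegree :=
    hg ▸ natDegree_sub_eq_right_of_natDegree_lt (by simpa using hdeg)
  have heval : ∀ β ∈ f.roots, ∀ γ ∈ g.roots, ∀ i j : ℕ,
      (g ^ i * f ^ j).eval (β + γ) = β ^ i * γ ^ j := fun β hβ γ hγ => by
    subst hg
    exact eval_X_sub_pow_mul_pow_add_of_isRoot hlin.eval_add (isRoot_of_mem_roots hβ)
      (isRoot_of_mem_roots hγ)
  have hind := linearIndependent_evalOn_rootSumSet
    (hrn.trans (hsepf.card_roots_toFinset hfs).ge)
    (hrn.trans (hdegg ▸ hsepg.card_roots_toFinset hgs).ge) heval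
  exact ⟨hind.of_comp _, hind, finrank_map_evalOn_span_Bset hind⟩

/-- Under the construction setup with `0 ≤ r ≤ 𝔫`, the `r²` polynomials
`g^i f^j` (`0 ≤ i, j ≤ r-1`) are linearly independent over `F`; moreover, their evaluation
vectors on the `𝔫²` points of `Z_f ⊕ Z_g` are linearly independent over `F`, so the
evaluation code of `span_F(B_{r²})` on `Z_f ⊕ Z_g` has dimension exactly `r²`. -/
theorem stmt_2 (p e : ℕ) (hp : p.Prime) (he : 0 < e)
    (F : Type*) [Field F] [Fintype F] [CharP F p]
    (f : F[X])
    (hflin : ∀ m ∈ f.support, ∃ i : ℕ, m = (p ^ e) ^ i)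
    (hdeg : 1 < f.natDegree)
    (ha0 : f.coeff 1 ≠ 0) (ha1 : f.coeff 1 ≠ 1)
    (g : F[X]) (hg : g = X - f)
    (hfs : f.Splits) (hgs : g.Splits)
    (r : ℕ) (hrn : r ≤ f.natDegree) :
    LinearIndependent F
      (fun ij : Fin r × Fin r => (g ^ (ij.1 : ℕ) * f ^ (ij.2 : ℕ) : F[X])) ∧
    LinearIndependent F
      (fun ij : Fin r × Fin r =>
        evalOn (rootSumSet f g) (g ^ (ij.1 : ℕ) * f ^ (ij.2 : ℕ))) ∧
    Module.finrank F
      ↥(Submodule.map (evalOn (rootSumSet f g)) (Submodule.span F (Bset f g r))) = r ^ 2 :=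
  stmt_2_general p e hp F f hflin hdeg ha0 ha1 g hg hfs hgs r hrn
end

section
/- Under the construction setup with 1 ≤ r ≤ 𝔫, a function u : Z_f ⊕ Z_g → F is the evaluation on Z_f ⊕ Z_g of some polynomial in span_F(B_{r²}) if and only if there exists a bivariate polynomial s ∈ F[x,y] with deg_x(s) < r and deg_y(s) < r such that u(β + γ) = s(β, γ) for all β ∈ Z_f and γ ∈ Z_g; that is, the evaluation code of span_F(B_{r²}) on Z_f ⊕ Z_g coincides, up to the relabeling of coordinates (β, γ) ↦ β + γ, with the tensor product code RS(r, Z_f) ⊗ RS(r, Z_g). -/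
open Polynomial
open scoped Classical

/-!
A `q`-linearized polynomial in characteristic `p` is additive, so for `β ∈ Z_f`, `γ ∈ Z_g`
(where `f γ = γ` because `g = x - f`) we get `f (β + γ) = γ` and `g (β + γ) = β`. Hence
substituting `(g, f)` for the variables of `s` turns evaluation of `s` at `(β, γ)` into evaluation
at `β + γ`, and it maps the bivariate polynomials of degree `< r` in each variable onto
`span B_{r²}`, monomial `x^i y^j` to `g^i f^j`.
-/

namespace Polynomial

theorem eval_add_of_support_pow {R : Type*} [CommSemiring R] {p : ℕ} [ExpChar R p] {f : R[X]}
    (hf : ∀ m ∈ f.support, ∃ i, m = p ^ i) (x y : R) :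
    f.eval (x + y) = f.eval x + f.eval y := by
  simp only [eval_eq_sum, Polynomial.sum_def, ← Finset.sum_add_distrib, ← mul_add]
  refine Finset.sum_congr rfl fun m hm => ?_
  obtain ⟨i, rfl⟩ := hf m hm
  rw [add_pow_expChar_pow]

section RootSum

variable {R : Type*} [CommRing R] {f : R[X]} {β γ : R}

theorem eval_add_of_isRoot_of_isRoot_X_sub
    (hadd : ∀ x y : R, f.eval (x + y) = f.eval x + f.eval y)
    (hβ : f.IsRoot β) (hγ : (X - f).IsRoot γ) : f.eval (β + γ) = γ := by
  have hfγ : f.eval γ = γ := by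
    have := hγ.eq_zero
    rw [eval_sub, eval_X, sub_eq_zero] at this
    exact this.symm
  rw [hadd, hβ.eq_zero, zero_add, hfγ]

theorem eval_add_aeval_X_sub_of_isRoot
    (hadd : ∀ x y : R, f.eval (x + y) = f.eval x + f.eval y)
    (hβ : f.IsRoot β) (hγ : (X - f).IsRoot γ) (s : MvPolynomial (Fin 2) R) :
    (MvPolynomial.aeval ![X - f, f] s).eval (β + γ) = MvPolynomial.eval ![β, γ] s := by
  have hf := eval_add_of_isRoot_of_isRoot_X_sub hadd hβ hγ
  have hv : (fun i => aeval (β + γ) (![X - f, f] i)) = ![β, γ] := by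
    funext i
    fin_cases i <;> simp [hf]
  rw [← coe_aeval_eq_eval, MvPolynomial.comp_aeval_apply, hv, MvPolynomial.aeval_eq_eval]

end RootSum

end Polynomial

namespace MvPolynomial

variable {R : Type*} [CommSemiring R] {σ : Type*}

theorem mem_restrictSupport_iff_degreeOf_lt {r : ℕ} (hr : 0 < r) {s : MvPolynomial σ R} :
    s ∈ restrictSupport R {n | ∀ i, n i < r} ↔ ∀ i, degreeOf i s < r := by
  simp only [mem_restrictSupport_iff, degreeOf_lt_iff hr, Set.subset_def, Finset.mem_coe,
    Set.mem_ofPred_eq]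
  exact ⟨fun h i m hm => h m hm i, fun h m hm i => h i m hm⟩

theorem aeval_monomial_fin_two {A : Type*} [CommSemiring A] [Algebra R A] (a b : A)
    (n : Fin 2 →₀ ℕ) : aeval (R := R) ![a, b] (monomial n 1) = a ^ n 0 * b ^ n 1 := by
  simp [aeval_monomial, Finsupp.prod_fintype, Fin.prod_univ_two]

theorem map_aeval_restrictSupport_fin_two {A : Type*} [CommSemiring A] [Algebra R A] (a b : A)
    (r : ℕ) :
    (restrictSupport R {n : Fin 2 →₀ ℕ | ∀ i, n i < r}).map (aeval ![a, b]).toLinearMap =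
      Submodule.span R {w | ∃ i j : ℕ, i < r ∧ j < r ∧ w = a ^ i * b ^ j} := by
  rw [restrictSupport_eq_span, Submodule.map_span, ← Set.image_comp]
  congr 1
  ext w
  simp only [Set.mem_image, Set.mem_ofPred_eq, Function.comp_apply, AlgHom.toLinearMap_apply]
  constructor
  · rintro ⟨n, hn, rfl⟩
    exact ⟨n 0, n 1, hn 0, hn 1, aeval_monomial_fin_two a b n⟩
  · rintro ⟨i, j, hi, hj, rfl⟩
    refine ⟨Finsupp.equivFunOnFinite.symm ![i, j], ?_, by simp [aeval_monomial_fin_two]⟩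
    simp [Fin.forall_fin_two, hi, hj]

end MvPolynomial

theorem evalOn_rootSumSet_eq_iff {F : Type*} [Field F] {f g w : F[X]} {φ : F → F → F}
    (hw : ∀ β ∈ f.roots.toFinset, ∀ γ ∈ g.roots.toFinset, w.eval (β + γ) = φ β γ)
    (u : ↥(rootSumSet f g) → F) :
    evalOn (rootSumSet f g) w = u ↔
      ∀ β ∈ f.roots.toFinset, ∀ γ ∈ g.roots.toFinset,
        ∀ hβγ : β + γ ∈ rootSumSet f g, u ⟨β + γ, hβγ⟩ = φ β γ := by
  rw [funext_iff, Subtype.forall]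
  constructor
  · intro h β hβ γ hγ hβγ
    exact (h _ hβγ).symm.trans (hw β hβ γ hγ)
  · intro h x hx
    obtain ⟨⟨β, γ⟩, hβγ, rfl⟩ := Finset.mem_image.mp hx
    obtain ⟨hβ, hγ⟩ := Finset.mem_product.mp hβγ
    exact (hw β hβ γ hγ).trans (h β hβ γ hγ hx).symm

theorem stmt_3_general (p e : ℕ) (hp : p.Prime)
    (F : Type*) [Field F] [CharP F p]
    (f : F[X])
    (hflin : ∀ m ∈ f.support, ∃ i : ℕ, m = (p ^ e) ^ i)
    (g : F[X]) (hg : g = X - f)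
    (r : ℕ) (hr : 1 ≤ r)
    (u : ↥(rootSumSet f g) → F) :
    u ∈ Submodule.map (evalOn (rootSumSet f g)) (Submodule.span F (Bset f g r)) ↔
      ∃ s : MvPolynomial (Fin 2) F,
        MvPolynomial.degreeOf 0 s < r ∧ MvPolynomial.degreeOf 1 s < r ∧
        ∀ β ∈ f.roots.toFinset, ∀ γ ∈ g.roots.toFinset,
          ∀ hβγ : β + γ ∈ rootSumSet f g,
            u ⟨β + γ, hβγ⟩ = MvPolynomial.eval ![β, γ] s := by
  have := ExpChar.prime (R := F) hp
  have hadd : ∀ x y : F, f.eval (x + y) = f.eval x + f.eval y :=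
    eval_add_of_support_pow fun m hm => by
      obtain ⟨i, rfl⟩ := hflin m hm
      exact ⟨e * i, (pow_mul p e i).symm⟩
  have hspan : Submodule.span F (Bset f g r) =
      (MvPolynomial.restrictSupport F {n : Fin 2 →₀ ℕ | ∀ i, n i < r}).map
        (MvPolynomial.aeval ![g, f]).toLinearMap :=
    (MvPolynomial.map_aeval_restrictSupport_fin_two g f r).symm
  rw [hspan, ← Submodule.map_comp, Submodule.mem_map]
  refine exists_congr fun s => ?_
  rw [MvPolynomial.mem_restrictSupport_iff_degreeOf_lt hr, Fin.forall_fin_two, and_assoc]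
  refine and_congr_right fun _ => and_congr_right fun _ => evalOn_rootSumSet_eq_iff ?_ u
  intro β hβ γ hγ
  subst hg
  exact eval_add_aeval_X_sub_of_isRoot hadd (isRoot_of_mem_roots (Multiset.mem_toFinset.mp hβ))
    (isRoot_of_mem_roots (Multiset.mem_toFinset.mp hγ)) s

/-- Under the construction setup with `1 ≤ r ≤ 𝔫`, a function
`u : Z_f ⊕ Z_g → F` lies in the evaluation code of `span_F(B_{r²})` on `Z_f ⊕ Z_g` if and
only if there is a bivariate polynomial `s ∈ F[x,y]` with `deg_x s < r` and `deg_y s < r`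
such that `u(β + γ) = s(β, γ)` for all `β ∈ Z_f`, `γ ∈ Z_g`; i.e. the evaluation code
coincides, up to the relabeling `(β, γ) ↦ β + γ`, with the product code
`RS(r, Z_f) ⊗ RS(r, Z_g)`. -/
theorem stmt_3 (p e : ℕ) (hp : p.Prime) (he : 0 < e)
    (F : Type*) [Field F] [Fintype F] [CharP F p]
    (f : F[X])
    (hflin : ∀ m ∈ f.support, ∃ i : ℕ, m = (p ^ e) ^ i)
    (hdeg : 1 < f.natDegree)
    (ha0 : f.coeff 1 ≠ 0) (ha1 : f.coeff 1 ≠ 1)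
    (g : F[X]) (hg : g = X - f)
    (hfs : f.Splits) (hgs : g.Splits)
    (r : ℕ) (hr : 1 ≤ r) (hrn : r ≤ f.natDegree)
    (u : ↥(rootSumSet f g) → F) :
    u ∈ Submodule.map (evalOn (rootSumSet f g)) (Submodule.span F (Bset f g r)) ↔
      ∃ s : MvPolynomial (Fin 2) F,
        MvPolynomial.degreeOf 0 s < r ∧ MvPolynomial.degreeOf 1 s < r ∧
        ∀ β ∈ f.roots.toFinset, ∀ γ ∈ g.roots.toFinset,
          ∀ hβγ : β + γ ∈ rootSumSet f g,
            u ⟨β + γ, hβγ⟩ = MvPolynomial.eval ![β, γ] s :=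
  stmt_3_general p e hp F f hflin g hg r hr u
end

section
/- Under the construction setup with 1 ≤ r ≤ 𝔫, the set of degrees of nonzero polynomials in span_F(B_{r²}) equals D = { t·𝔫 + ℓ : t, ℓ integers with 0 ≤ t ≤ 2(r−1) and 0 ≤ ℓ ≤ r − 1 − ⌈t/2⌉ }. Equivalently, D is the set of degrees of the polynomials in any basis of span_F(B_{r²}) in row echelon form (a basis consisting of polynomials of pairwise distinct degrees). -/
/-!
Since `X = f + g`, binomial expansion puts every `X^ℓ g^a f^b` with `ℓ + a, ℓ + b < r` into the
span of `B_{r²}`; conversely, rewriting `g^(a+1) = X g^a - f g^a` (or `f^(b+1) = X f^b - g f^b`)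
moves a factor into `X^ℓ` and brings the exponents of `g` and `f` closer together, so
`B_{r²}` spans the same space as the balanced monomials `X^ℓ g^⌈t/2⌉ f^⌊t/2⌋` indexed by `D`.
As `deg g = deg f = 𝔫`, such a monomial has degree `t𝔫 + ℓ`, and these degrees are pairwise
distinct because `ℓ < r ≤ 𝔫`; the degree of a nonzero combination of polynomials of distinct
degrees is the largest degree occurring in it.
-/

open Polynomial
open scoped Classical

open Submodule
open scoped Function

namespace Polynomial

variable {R : Type*} [Semiring R] [NoZeroDivisors R]

theorem exists_natDegree_eq_of_mem_span_image {ι : Type*} {s : Set ι} {v : ι → R[X]}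
    (hv : s.InjOn (natDegree ∘ v)) {w : R[X]} (hw : w ∈ span R (v '' s)) (hw0 : w ≠ 0) :
    ∃ i ∈ s, w.natDegree = (v i).natDegree := by
  obtain ⟨t, hts, c, rfl⟩ := mem_span_image_iff_exists_fun R |>.mp hw
  have hdeg_smul : ∀ i : t, c i • v i ≠ 0 → (c i • v i).degree = (v i).degree := fun i hi =>
    by rw [smul_eq_C_mul, degree_C_mul (left_ne_zero_of_smul hi)]
  have hdisj : Set.Pairwise {i | i ∈ Finset.univ ∧ c i • v i ≠ 0}
      (Ne on fun i : t => (c i • v i).degree) := by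
    rintro i ⟨-, hi⟩ j ⟨-, hj⟩ hij hdeg
    dsimp only at hdeg
    rw [hdeg_smul i hi, hdeg_smul j hj] at hdeg
    refine hij (Subtype.ext (hv (hts i.2) (hts j.2) ?_))
    exact natDegree_eq_of_degree_eq hdeg
  have hne : (Finset.univ : Finset t).Nonempty := by
    by_contra! h
    exact hw0 (by simp [h])
  obtain ⟨i, -, hi⟩ := Finset.exists_mem_eq_sup _ hne fun i : t => (c i • v i).degree
  have hsum := degree_sum_eq_of_disjoint _ _ hdisj
  rw [hi] at hsum
  have hci : c i • v i ≠ 0 := by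
    rintro h
    rw [h, degree_zero, degree_eq_bot] at hsum
    exact hw0 hsum
  exact ⟨i, hts i.2, natDegree_eq_of_degree_eq (hsum.trans (hdeg_smul i hci))⟩

end Polynomial

section EchelonSpan

variable {R A : Type*} [Ring R] [CommRing A] [Module R A]

def echelonIndex (r : ℕ) : Set (ℕ × ℕ) :=
  {q | q.1 ≤ 2 * (r - 1) ∧ q.2 ≤ r - 1 - (q.1 + 1) / 2}

/-- `x^ℓ g^⌈t/2⌉ f^⌊t/2⌋` for `q = (t, ℓ)`. -/
def echelonMonomial (x g f : A) (q : ℕ × ℕ) : A :=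
  x ^ q.2 * g ^ ((q.1 + 1) / 2) * f ^ (q.1 / 2)

variable {x g f : A} {r : ℕ}

theorem pow_mul_pow_mul_pow_mem_span_pow_mul_pow (hx : x = f + g) {ℓ a b : ℕ}
    (ha : ℓ + a < r) (hb : ℓ + b < r) :
    x ^ ℓ * g ^ a * f ^ b ∈ span R {w | ∃ i j : ℕ, i < r ∧ j < r ∧ w = g ^ i * f ^ j} := by
  have hexpand : x ^ ℓ * g ^ a * f ^ b
      = ∑ i ∈ Finset.range (ℓ + 1), ℓ.choose i • (g ^ (ℓ - i + a) * f ^ (i + b)) := by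
    rw [hx, add_pow, Finset.sum_mul, Finset.sum_mul]
    refine Finset.sum_congr rfl fun i _ => ?_
    rw [nsmul_eq_mul, pow_add, pow_add]
    ring
  rw [hexpand]
  refine sum_mem fun i hi => nsmul_mem (subset_span ?_) _
  have := Finset.mem_range.1 hi
  exact ⟨ℓ - i + a, i + b, by omega, by omega, rfl⟩

theorem pow_mul_pow_mul_pow_mem_span_echelon (hx : x = f + g) (ℓ a b : ℕ)
    (ha : ℓ + a < r) (hb : ℓ + b < r) :
    x ^ ℓ * g ^ a * f ^ b ∈ span R (echelonMonomial x g f '' echelonIndex r) := by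
  have hg : g = x - f := by rw [hx]; ring
  if hbal : b ≤ a ∧ a ≤ b + 1 then
    refine subset_span ⟨(a + b, ℓ), ⟨by omega, by omega⟩, ?_⟩
    rw [echelonMonomial, show (a + b + 1) / 2 = a by omega, show (a + b) / 2 = b by omega]
  else if hab : b + 2 ≤ a then
    obtain ⟨a, rfl⟩ : ∃ a', a = a' + 1 := ⟨a - 1, by omega⟩
    have hsplit : x ^ ℓ * g ^ (a + 1) * f ^ b
        = x ^ (ℓ + 1) * g ^ a * f ^ b - x ^ ℓ * g ^ a * f ^ (b + 1) := by
      rw [hg]; ring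
    rw [hsplit]
    exact sub_mem (pow_mul_pow_mul_pow_mem_span_echelon hx (ℓ + 1) a b (by omega) (by omega))
      (pow_mul_pow_mul_pow_mem_span_echelon hx ℓ a (b + 1) (by omega) (by omega))
  else
    obtain ⟨b, rfl⟩ : ∃ b', b = b' + 1 := ⟨b - 1, by omega⟩
    have hsplit : x ^ ℓ * g ^ a * f ^ (b + 1)
        = x ^ (ℓ + 1) * g ^ a * f ^ b - x ^ ℓ * g ^ (a + 1) * f ^ b := by
      rw [hg]; ring
    rw [hsplit]
    exact sub_mem (pow_mul_pow_mul_pow_mem_span_echelon hx (ℓ + 1) a b (by omega) (by omega))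
      (pow_mul_pow_mul_pow_mem_span_echelon hx ℓ (a + 1) b (by omega) (by omega))
-- `b - a` is weighted by 2 because rebalancing at `b = a + 1` produces `a = b + 1`.
termination_by a - b + 2 * (b - a)
decreasing_by all_goals omega

theorem span_pow_mul_pow_eq_span_echelon (hx : x = f + g) (hr : 1 ≤ r) :
    span R {w | ∃ i j : ℕ, i < r ∧ j < r ∧ w = g ^ i * f ^ j} =
      span R (echelonMonomial x g f '' echelonIndex r) := by
  refine le_antisymm (span_le.2 ?_) (span_le.2 ?_)
  · rintro w ⟨i, j, hi, hj, rfl⟩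
    simpa using pow_mul_pow_mul_pow_mem_span_echelon (R := R) hx 0 i j (by omega) (by omega)
  · rintro w ⟨q, ⟨ht, hℓ⟩, rfl⟩
    exact pow_mul_pow_mul_pow_mem_span_pow_mul_pow hx (by omega) (by omega)

end EchelonSpan

section EchelonDegree

variable {R : Type*} [CommRing R] [IsDomain R] {f g : R[X]}

theorem echelonMonomial_ne_zero (hf : f ≠ 0) (hg : g ≠ 0) (q : ℕ × ℕ) :
    echelonMonomial X g f q ≠ 0 :=
  mul_ne_zero (mul_ne_zero (pow_ne_zero _ X_ne_zero) (pow_ne_zero _ hg)) (pow_ne_zero _ hf)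

theorem natDegree_echelonMonomial (hf : f ≠ 0) (hg : g ≠ 0)
    (hfg : g.natDegree = f.natDegree) (q : ℕ × ℕ) :
    (echelonMonomial X g f q).natDegree = q.1 * f.natDegree + q.2 := by
  rw [echelonMonomial, natDegree_mul (by simp [hg]) (pow_ne_zero _ hf),
    natDegree_mul (by simp) (pow_ne_zero _ hg), natDegree_pow, natDegree_pow, natDegree_pow,
    natDegree_X, hfg, mul_one, add_assoc, ← add_mul, show (q.1 + 1) / 2 + q.1 / 2 = q.1 by omega,
    add_comm]

end EchelonDegree

theorem Nat.eq_and_eq_of_mul_add_eq {n t t' ℓ ℓ' : ℕ} (hℓ : ℓ < n) (hℓ' : ℓ' < n)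
    (h : t * n + ℓ = t' * n + ℓ') : t = t' ∧ ℓ = ℓ' := by
  have hℓeq : ℓ = ℓ' :=
    calc ℓ = (t * n + ℓ) % n := (Nat.mul_add_mod_of_lt hℓ).symm
      _ = (t' * n + ℓ') % n := by rw [h]
      _ = ℓ' := Nat.mul_add_mod_of_lt hℓ'
  subst hℓeq
  exact ⟨Nat.eq_of_mul_eq_mul_right (by omega) (Nat.add_right_cancel h), rfl⟩

theorem injOn_echelonIndex {n r : ℕ} (hr : 1 ≤ r) (hrn : r ≤ n) :
    (echelonIndex r).InjOn fun q => q.1 * n + q.2 := by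
  rintro ⟨t, ℓ⟩ ⟨-, hℓ⟩ ⟨t', ℓ'⟩ ⟨-, hℓ'⟩ h
  obtain ⟨rfl, rfl⟩ := Nat.eq_and_eq_of_mul_add_eq (by omega) (by omega) h
  rfl

theorem stmt_4_general (F : Type*) [Field F]
    (f : F[X])
    (hdeg : 1 < f.natDegree)
    (g : F[X]) (hg : g = X - f)
    (r : ℕ) (hr : 1 ≤ r) (hrn : r ≤ f.natDegree) :
    {d : ℕ | ∃ w ∈ Submodule.span F (Bset f g r), w ≠ 0 ∧ w.natDegree = d} =
      {d : ℕ | ∃ t ℓ : ℕ, t ≤ 2 * (r - 1) ∧ ℓ ≤ r - 1 - (t + 1) / 2 ∧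
        d = t * f.natDegree + ℓ} := by
  have hf0 : f ≠ 0 := by rintro rfl; simp at hdeg
  have hgdeg : g.natDegree = f.natDegree := by
    rw [hg]; exact natDegree_sub_eq_right_of_natDegree_lt (by simpa using hdeg)
  have hg0 : g ≠ 0 := by rintro rfl; simp at hgdeg; omega
  have hspan : span F (Bset f g r) = span F (echelonMonomial X g f '' echelonIndex r) :=
    span_pow_mul_pow_eq_span_echelon (by rw [hg]; ring) hr
  have hdegv := natDegree_echelonMonomial hf0 hg0 hgdeg
  ext d
  rw [hspan]
  constructor
  · rintro ⟨w, hw, hw0, rfl⟩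
    have hinj : (echelonIndex r).InjOn (natDegree ∘ echelonMonomial X g f) := by
      simpa only [Function.comp_def, hdegv] using injOn_echelonIndex hr hrn
    obtain ⟨⟨t, ℓ⟩, ⟨ht, hℓ⟩, hw⟩ := exists_natDegree_eq_of_mem_span_image hinj hw hw0
    exact ⟨t, ℓ, ht, hℓ, by rw [hw, hdegv]⟩
  · rintro ⟨t, ℓ, ht, hℓ, rfl⟩
    exact ⟨_, subset_span ⟨(t, ℓ), ⟨ht, hℓ⟩, rfl⟩, echelonMonomial_ne_zero hf0 hg0 _, hdegv _⟩

/-- Under the construction setup with `1 ≤ r ≤ 𝔫`, the set of degrees of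
nonzero polynomials in `span_F(B_{r²})` equals
`D = { t·𝔫 + ℓ : 0 ≤ t ≤ 2(r-1), 0 ≤ ℓ ≤ r - 1 - ⌈t/2⌉ }`
(equivalently, the set of degrees of any basis of `span_F(B_{r²})` in row echelon form).
Here `⌈t/2⌉ = (t+1)/2` in natural-number arithmetic. -/
theorem stmt_4 (p e : ℕ) (hp : p.Prime) (he : 0 < e)
    (F : Type*) [Field F] [Fintype F] [CharP F p]
    (f : F[X])
    (hflin : ∀ m ∈ f.support, ∃ i : ℕ, m = (p ^ e) ^ i)
    (hdeg : 1 < f.natDegree)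
    (ha0 : f.coeff 1 ≠ 0) (ha1 : f.coeff 1 ≠ 1)
    (g : F[X]) (hg : g = X - f)
    (hfs : (f.map (RingHom.id F)).Splits) (hgs : (g.map (RingHom.id F)).Splits)
    (r : ℕ) (hr : 1 ≤ r) (hrn : r ≤ f.natDegree) :
    {d : ℕ | ∃ w ∈ Submodule.span F (Bset f g r), w ≠ 0 ∧ w.natDegree = d} =
      {d : ℕ | ∃ t ℓ : ℕ, t ≤ 2 * (r - 1) ∧ ℓ ≤ r - 1 - (t + 1) / 2 ∧
        d = t * f.natDegree + ℓ} :=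
  stmt_4_general F f hdeg g hg r hr hrn
end

section
/- Let r and n be integers with 1 ≤ r ≤ n, let D := { t·n + ℓ : t, ℓ integers with 0 ≤ t ≤ 2(r−1), 0 ≤ ℓ ≤ r − 1 − ⌈t/2⌉ } (a set of r² integers), and enumerate D in increasing order as ∂_1 < ∂_2 < ... < ∂_{r²}. For an integer 0 ≤ t ≤ 2r−2, set k_t := (t+1)·r − ⌊(t+1)/2⌋ · ⌈(t+1)/2⌉. Then ∂_{k_t} = t·n + r − 1 − ⌊(t+1)/2⌋; moreover, with the convention k_{−1} := 0, for every integer k with k_{t−1} < k < k_t one has ∂_k = ∂_{k_t} − (k_t − k). -/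
/-- The degree set `D = { t·n + ℓ : 0 ≤ t ≤ 2(r-1), 0 ≤ ℓ ≤ r - 1 - ⌈t/2⌉ }`
(note `⌈t/2⌉ = (t+1)/2` in natural-number arithmetic). -/
def Dset (n r : ℕ) : Finset ℕ :=
  (Finset.range (2 * (r - 1) + 1)).biUnion fun t =>
    (Finset.range (r - (t + 1) / 2)).image fun ℓ => t * n + ℓ

/-- `v` is the `k`-th smallest element of the finite set `D` of naturals. -/
def IsNthSmallest (D : Finset ℕ) (k : ℕ) (v : ℕ) : Prop :=
  v ∈ D ∧ (D.filter fun x => x ≤ v).card = k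

lemma sum_halves (t : ℕ) : ∑ s ∈ Finset.range t, (s + 1) / 2 = (t / 2) * ((t + 1) / 2) := by
  induction t with
  | zero => simp
  | succ t ih =>
    rw [Finset.sum_range_succ, ih]
    rcases Nat.even_or_odd t with ⟨c, hc⟩ | ⟨c, hc⟩ <;> subst hc
    · have h1 : (c + c) / 2 = c := by omega
      have h2 : (c + c + 1) / 2 = c := by omega
      have h3 : (c + c + 2) / 2 = c + 1 := by omega
      rw [h1, h2, h3]; ring
    · have h1 : (2*c+1) / 2 = c := by omega
      have h2 : (2*c+1 + 1) / 2 = c + 1 := by omega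
      have h3 : (2*c+1 + 2) / 2 = c + 1 := by omega
      rw [h1, h2, h3]; ring

lemma filter_card (r n : ℕ) (hrn : r ≤ n) (t m : ℕ)
    (ht : t < 2 * (r - 1) + 1) (hm : m < r - (t + 1) / 2) :
    ((Dset n r).filter (fun x => x ≤ t * n + m)).card
      = (∑ s ∈ Finset.range t, (r - (s + 1) / 2)) + (m + 1) := by
  unfold Dset
  rw [Finset.filter_biUnion]
  rw [Finset.card_biUnion]
  · have hcard : ∀ s ∈ Finset.range (2 * (r - 1) + 1),
        ((( Finset.range (r - (s + 1) / 2)).image fun ℓ => s * n + ℓ).filter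
          (fun x => x ≤ t * n + m)).card
        = if s < t then r - (s + 1) / 2 else if s = t then m + 1 else 0 := by
      intro s _
      rw [Finset.filter_image]
      rw [Finset.card_image_of_injective _ (fun a b h => by simpa using h)]
      by_cases hst : s < t
      · rw [if_pos hst]
        rw [Finset.filter_true_of_mem]
        · exact Finset.card_range _
        · intro ℓ hℓ
          simp only [Finset.mem_range] at hℓ
          have : ℓ < n := by omega
          have : s * n + ℓ < (s + 1) * n := by nlinarith
          have : (s + 1) * n ≤ t * n := Nat.mul_le_mul_right n (by omega)
          omega
      · rw [if_neg hst]
        by_cases hst2 : s = t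
        · subst hst2
          rw [if_pos rfl]
          have : (Finset.range (r - (s + 1) / 2)).filter
              (fun a => s * n + a ≤ s * n + m) = Finset.range (m + 1) := by
            ext ℓ
            simp only [Finset.mem_filter, Finset.mem_range]
            omega
          rw [this, Finset.card_range]
        · rw [if_neg hst2]
          rw [Finset.card_eq_zero, Finset.filter_eq_empty_iff]
          intro ℓ hℓ
          simp only [Finset.mem_range] at hℓ
          have hs : t + 1 ≤ s := by omega
          have : (t + 1) * n ≤ s * n := Nat.mul_le_mul_right n hs
          have : t * n + n ≤ s * n := by nlinarith [this]
          omega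
    rw [Finset.sum_congr rfl hcard]
    rw [← Finset.sum_subset (Finset.range_subset_range.2 (show t + 1 ≤ 2 * (r - 1) + 1 by omega))]
    · rw [Finset.sum_range_succ]
      simp only [lt_irrefl, if_false, if_pos rfl]
      congr 1
      exact Finset.sum_congr rfl fun s hs => by
        rw [if_pos (Finset.mem_range.1 hs)]
    · intro s _ hs
      simp only [Finset.mem_range] at hs
      have h1 : ¬ s < t := by omega
      have h2 : s ≠ t := by omega
      rw [if_neg h1, if_neg h2]
  · intro s1 _ s2 _ hne
    apply Finset.disjoint_left.2
    intro x hx1 hx2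
    simp only [Finset.mem_filter, Finset.mem_image, Finset.mem_range] at hx1 hx2
    obtain ⟨⟨ℓ1, hℓ1, rfl⟩, -⟩ := hx1
    obtain ⟨⟨ℓ2, hℓ2, he⟩, -⟩ := hx2
    have hℓ1n : ℓ1 < n := by omega
    have hℓ2n : ℓ2 < n := by omega
    rcases Nat.lt_or_ge s1 s2 with h | h
    · have e1 : s1 * n + n ≤ s2 * n := by
        calc s1 * n + n = (s1 + 1) * n := by ring
        _ ≤ s2 * n := Nat.mul_le_mul_right n h
      linarith
    · have hlt : s2 < s1 := by omega
      have e1 : s2 * n + n ≤ s1 * n := by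
        calc s2 * n + n = (s2 + 1) * n := by ring
        _ ≤ s1 * n := Nat.mul_le_mul_right n hlt
      linarith

/-- The element `t*n + m` is the `(t*r - (t/2)*((t+1)/2) + m + 1)`-th smallest. -/
lemma count_lemma (r n : ℕ) (hrn : r ≤ n) (t m : ℕ)
    (ht : t < 2 * (r - 1) + 1) (hm : m < r - (t + 1) / 2) :
    IsNthSmallest (Dset n r) (t * r - (t / 2) * ((t + 1) / 2) + (m + 1)) (t * n + m) := by
  constructor
  · unfold Dset
    rw [Finset.mem_biUnion]
    exact ⟨t, Finset.mem_range.2 ht, Finset.mem_image.2 ⟨m, Finset.mem_range.2 hm, rfl⟩⟩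
  · rw [filter_card r n hrn t m ht hm]
    congr 1
    -- ∑ s ∈ range t, (r - (s+1)/2) = t*r - (t/2)*((t+1)/2)
    have hterm : ∀ s ∈ Finset.range t, (r - (s + 1) / 2) + (s + 1) / 2 = r := by
      intro s hs
      simp only [Finset.mem_range] at hs
      omega
    have hsum : (∑ s ∈ Finset.range t, (r - (s + 1) / 2))
        + (∑ s ∈ Finset.range t, (s + 1) / 2) = t * r := by
      rw [← Finset.sum_add_distrib, Finset.sum_congr rfl hterm, Finset.sum_const,
        Finset.card_range, smul_eq_mul]
    rw [sum_halves] at hsum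
    exact Nat.eq_sub_of_add_eq hsum

/-- Let `1 ≤ r ≤ n` and let `∂_1 < ∂_2 < ⋯ < ∂_{r²}` enumerate
`D = { t·n + ℓ : 0 ≤ t ≤ 2(r-1), 0 ≤ ℓ ≤ r - 1 - ⌈t/2⌉ }` increasingly.  For
`0 ≤ t ≤ 2r-2` set `k_t = (t+1)·r − ⌊(t+1)/2⌋·⌈(t+1)/2⌉`.  Then
`∂_{k_t} = t·n + r − 1 − ⌊(t+1)/2⌋`; moreover, with the convention `k_{−1} := 0`
(note `k_{t-1} = t·r − ⌊t/2⌋·⌈t/2⌉` also covers `t = 0`), for every `k` with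
`k_{t−1} < k < k_t` one has `∂_k = ∂_{k_t} − (k_t − k)`. -/
theorem stmt_6 (r n : ℕ) (h1 : 1 ≤ r) (hrn : r ≤ n) (t : ℕ) (ht : t ≤ 2 * r - 2) :
    IsNthSmallest (Dset n r) ((t + 1) * r - ((t + 1) / 2) * ((t + 2) / 2))
      (t * n + r - 1 - (t + 1) / 2) ∧
    (∀ k : ℕ, t * r - (t / 2) * ((t + 1) / 2) < k →
      k < (t + 1) * r - ((t + 1) / 2) * ((t + 2) / 2) →
      IsNthSmallest (Dset n r) k
        ((t * n + r - 1 - (t + 1) / 2) -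
          (((t + 1) * r - ((t + 1) / 2) * ((t + 2) / 2)) - k))) := by
  have hb : (t + 1) / 2 ≤ r - 1 := by omega
  have ht' : t < 2 * (r - 1) + 1 := by omega
  have hQP : (t / 2) * ((t + 1) / 2) ≤ t * r :=
    Nat.mul_le_mul (by omega) (by omega)
  -- key rewriting of k_t
  have hk : (t + 1) * r - ((t + 1) / 2) * ((t + 2) / 2)
      = t * r - (t / 2) * ((t + 1) / 2) + ((r - 1 - (t + 1) / 2) + 1) := by
    have h2 : ((t + 1) / 2) * ((t + 2) / 2) = (t / 2) * ((t + 1) / 2) + (t + 1) / 2 := by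
      have e : (t + 2) / 2 = t / 2 + 1 := by omega
      rw [e]; ring
    have h3 : (t + 1) * r = t * r + r := by ring
    rw [h2, h3]
    generalize t * r = P at *
    generalize (t / 2) * ((t + 1) / 2) = Q at *
    omega
  have hval : t * n + r - 1 - (t + 1) / 2 = t * n + (r - 1 - (t + 1) / 2) := by
    generalize t * n = R
    omega
  constructor
  · rw [hk, hval]
    exact count_lemma r n hrn t _ ht' (by omega)
  · intro k hk1 hk2
    rw [hk] at hk2
    obtain ⟨K, hK⟩ : ∃ K, t * r - (t / 2) * ((t + 1) / 2) = K := ⟨_, rfl⟩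
    rw [hK] at hk hk1 hk2
    have hm : k - K - 1 < r - (t + 1) / 2 := by omega
    have hkeq : K + ((k - K - 1) + 1) = k := by omega
    have hcnt := count_lemma r n hrn t (k - K - 1) ht' hm
    rw [hK, hkeq] at hcnt
    have hv : (t * n + r - 1 - (t + 1) / 2) -
        (((t + 1) * r - ((t + 1) / 2) * ((t + 2) / 2)) - k) = t * n + (k - K - 1) := by
      rw [hk, hval]
      generalize t * n = R
      omega
    rw [hv]
    exact hcnt
end

section
/- Let 1 ≤ r ≤ n be integers and let C₁ and C₂ be linear codes of length n over 𝔽_q, each with minimum distance at least n − r + 1. Let C be a nonzero linear subcode of C₁ ⊗ C₂ with dimension k (so k ≤ r²) and minimum distance d. Then for all integers a, b with 0 ≤ a ≤ r, 0 ≤ b ≤ r, and a·b ≥ r² − k + 1, it holds that d ≤ (a + n − r)(b + n − r). -/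
open scoped Classical


/-- Hamming weight of a matrix: the number of nonzero entries. -/
noncomputable def matWeight {K : Type*} [Zero K] {m n : ℕ}
    (c : Matrix (Fin m) (Fin n) K) : ℕ :=
  (Finset.univ.filter fun p : Fin m × Fin n => c p.1 p.2 ≠ 0).card

/-- Membership in the tensor product code `C₁ ⊗ C₂`: every column (transposed) lies in
`C₁` and every row lies in `C₂`. -/
def MemProd {K : Type*} [Field K] {m n : ℕ}
    (C₁ : Submodule K (Fin m → K)) (C₂ : Submodule K (Fin n → K))
    (c : Matrix (Fin m) (Fin n) K) : Prop :=
  (∀ j, (fun i => c i j) ∈ C₁) ∧ (∀ i, (fun j => c i j) ∈ C₂)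

lemma card_fin_filter_lt' (n m : ℕ) (h : m ≤ n) :
    (Finset.univ.filter fun i : Fin n => i.val < m).card = m := by
  have he : (Finset.univ.filter fun i : Fin n => i.val < m)
      = (Finset.range m).attachFin (fun x hx => lt_of_lt_of_le (Finset.mem_range.mp hx) h) := by
    ext i
    simp [Finset.mem_attachFin]
  rw [he, Finset.card_attachFin, Finset.card_range]

lemma card_fin_filter_ge' (n m : ℕ) (h : m ≤ n) :
    (Finset.univ.filter fun i : Fin n => m ≤ i.val).card = n - m := by
  have he : (Finset.univ.filter fun i : Fin n => m ≤ i.val)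
      = Finset.univ \ (Finset.univ.filter fun i : Fin n => i.val < m) := by
    ext i
    simp [not_lt]
  rw [he, Finset.card_sdiff_of_subset (Finset.filter_subset _ _), card_fin_filter_lt' n m h,
    Finset.card_univ, Fintype.card_fin]

lemma card_fin_filter_or' (n m r : ℕ) (hmr : m ≤ r) (h : r ≤ n) :
    (Finset.univ.filter fun i : Fin n => i.val < m ∨ r ≤ i.val).card = m + (n - r) := by
  have he : (Finset.univ.filter fun i : Fin n => i.val < m ∨ r ≤ i.val)
      = (Finset.univ.filter fun i : Fin n => i.val < m)
        ∪ (Finset.univ.filter fun i : Fin n => r ≤ i.val) := by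
    ext i; simp
  rw [he, Finset.card_union_of_disjoint, card_fin_filter_lt' n m (le_trans hmr h),
    card_fin_filter_ge' n r h]
  rw [Finset.disjoint_filter]
  intro i _ h1
  omega

/-- Let `1 ≤ r ≤ n`, let `C₁, C₂` be linear codes of length `n` over a
finite field, each of minimum distance at least `n − r + 1`, and let `C ⊆ C₁ ⊗ C₂` be a
nonzero linear subcode of dimension `k` and minimum distance `d`.  Then for all integers
`0 ≤ a, b ≤ r` with `a·b ≥ r² − k + 1`, one has `d ≤ (a + n − r)(b + n − r)`. -/
theorem stmt_7 (q : ℕ) (K : Type*) [Field K] [Fintype K] (hq : Fintype.card K = q)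
    (n r : ℕ) (h1 : 1 ≤ r) (hrn : r ≤ n)
    (C₁ C₂ : Submodule K (Fin n → K))
    (hC₁ : ∀ c ∈ C₁, c ≠ 0 → n - r + 1 ≤ (Finset.univ.filter fun i => c i ≠ 0).card)
    (hC₂ : ∀ c ∈ C₂, c ≠ 0 → n - r + 1 ≤ (Finset.univ.filter fun i => c i ≠ 0).card)
    (C : Submodule K (Matrix (Fin n) (Fin n) K))
    (hC : ∀ c ∈ C, MemProd C₁ C₂ c) (hCne : C ≠ ⊥)
    (k : ℕ) (hk : Module.finrank K ↥C = k)
    (d : ℕ) (hd : IsLeast {w : ℕ | ∃ c ∈ C, c ≠ 0 ∧ matWeight c = w} d)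
    (a b : ℕ) (ha : a ≤ r) (hb : b ≤ r)
    (hab : (r : ℤ) ^ 2 - k + 1 ≤ (a : ℤ) * b) :
    (d : ℤ) ≤ ((a : ℤ) + n - r) * ((b : ℤ) + n - r) := by
  classical
  -- The "constraint" set Y : positions in the top-left r×r square outside the a×b corner.
  set Y : Finset (Fin n × Fin n) := Finset.univ.filter
    (fun p : Fin n × Fin n => (p.1.val < r ∧ p.2.val < r) ∧ ¬(p.1.val < a ∧ p.2.val < b))
    with hYdef
  have hmemY : ∀ p : Fin n × Fin n,
      p ∈ Y ↔ (p.1.val < r ∧ p.2.val < r) ∧ ¬(p.1.val < a ∧ p.2.val < b) := by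
    intro p; simp [hYdef]
  -- card Y = r*r - a*b
  have hYcard : Y.card = r * r - a * b := by
    have he : Y = ((Finset.univ.filter fun i : Fin n => i.val < r) ×ˢ
        (Finset.univ.filter fun i : Fin n => i.val < r)) \
        ((Finset.univ.filter fun i : Fin n => i.val < a) ×ˢ
        (Finset.univ.filter fun i : Fin n => i.val < b)) := by
      ext p
      simp [hYdef, Finset.mem_product]
    have hsub : ((Finset.univ.filter fun i : Fin n => i.val < a) ×ˢ
        (Finset.univ.filter fun i : Fin n => i.val < b)) ⊆
        ((Finset.univ.filter fun i : Fin n => i.val < r) ×ˢ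
        (Finset.univ.filter fun i : Fin n => i.val < r)) := by
      apply Finset.product_subset_product <;>
      · intro i hi
        simp only [Finset.mem_filter, Finset.mem_univ, true_and] at hi ⊢
        omega
    rw [he, Finset.card_sdiff_of_subset hsub, Finset.card_product, Finset.card_product,
      card_fin_filter_lt' n r hrn, card_fin_filter_lt' n a (le_trans ha hrn),
      card_fin_filter_lt' n b (le_trans hb hrn)]
  have hab_le : a * b ≤ r * r := Nat.mul_le_mul ha hb
  -- card Y < k
  have hYlt : Y.card < k := by
    rw [hYcard]
    have : ((r * r - a * b : ℕ) : ℤ) = (r : ℤ) * r - a * b := by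
      push_cast [Nat.cast_sub hab_le]; ring
    have h2 : ((r * r - a * b : ℕ) : ℤ) < k := by
      rw [this]; nlinarith [hab]
    exact_mod_cast h2
  -- The restriction linear map
  let φ : ↥C →ₗ[K] ({p : Fin n × Fin n // p ∈ Y} → K) :=
    { toFun := fun c p => (c : Matrix (Fin n) (Fin n) K) p.1.1 p.1.2
      map_add' := fun x y => by ext p; simp
      map_smul' := fun m x => by ext p; simp }
  have hφni : ¬ Function.Injective φ := by
    intro hinj
    have hle := LinearMap.finrank_le_finrank_of_injective hinj
    rw [hk, Module.finrank_fintype_fun_eq_card, Fintype.card_coe] at hle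
    omega
  have hker : LinearMap.ker φ ≠ ⊥ := fun h => hφni (LinearMap.ker_eq_bot.mp h)
  obtain ⟨x, hxker, hxne⟩ := Submodule.exists_mem_ne_zero_of_ne_bot hker
  set c : Matrix (Fin n) (Fin n) K := (x : Matrix (Fin n) (Fin n) K) with hcdef
  have hcC : c ∈ C := x.2
  have hcne : c ≠ 0 := fun h => hxne (Subtype.ext h)
  have hzero : ∀ p : Fin n × Fin n, p ∈ Y → c p.1 p.2 = 0 := by
    intro p hp
    have := LinearMap.mem_ker.mp hxker
    have h2 := congrFun this ⟨p, hp⟩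
    simpa [φ] using h2
  -- rows indexed by i with a ≤ i.val < r are zero
  have hrow : ∀ i : Fin n, a ≤ i.val → i.val < r → ∀ j, c i j = 0 := by
    intro i hia hir
    by_contra h
    push_neg at h
    obtain ⟨j₀, hj₀⟩ := h
    have hrowC₂ : (fun j => c i j) ∈ C₂ := (hC c hcC).2 i
    have hrne : (fun j => c i j) ≠ 0 := by
      intro h0
      exact hj₀ (congrFun h0 j₀)
    have hw := hC₂ _ hrowC₂ hrne
    have hsub : (Finset.univ.filter fun j : Fin n => c i j ≠ 0) ⊆
        (Finset.univ.filter fun j : Fin n => r ≤ j.val) := by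
      intro j hj
      simp only [Finset.mem_filter, Finset.mem_univ, true_and] at hj ⊢
      by_contra hjr
      push_neg at hjr
      exact hj (hzero (i, j) ((hmemY (i, j)).mpr ⟨⟨hir, hjr⟩, fun hh => by simp only [] at hh; omega⟩))
    have hcard := Finset.card_le_card hsub
    rw [card_fin_filter_ge' n r hrn] at hcard
    omega
  -- columns indexed by j with b ≤ j.val < r are zero
  have hcol : ∀ j : Fin n, b ≤ j.val → j.val < r → ∀ i, c i j = 0 := by
    intro j hjb hjr
    by_contra h
    push_neg at h
    obtain ⟨i₀, hi₀⟩ := h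
    have hcolC₁ : (fun i => c i j) ∈ C₁ := (hC c hcC).1 j
    have hcne' : (fun i => c i j) ≠ 0 := fun h0 => hi₀ (congrFun h0 i₀)
    have hw := hC₁ _ hcolC₁ hcne'
    have hsub : (Finset.univ.filter fun i : Fin n => c i j ≠ 0) ⊆
        (Finset.univ.filter fun i : Fin n => r ≤ i.val) := by
      intro i hi
      simp only [Finset.mem_filter, Finset.mem_univ, true_and] at hi ⊢
      by_contra hir
      push_neg at hir
      by_cases hia : i.val < a
      · exact hi (hzero (i, j) ((hmemY (i, j)).mpr ⟨⟨hir, hjr⟩, fun hh => by simp only [] at hh; omega⟩))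
      · exact hi (hrow i (by omega) hir j)
    have hcard := Finset.card_le_card hsub
    rw [card_fin_filter_ge' n r hrn] at hcard
    omega
  -- weight bound
  have hwb : matWeight c ≤ (a + (n - r)) * (b + (n - r)) := by
    have hsub : (Finset.univ.filter fun p : Fin n × Fin n => c p.1 p.2 ≠ 0) ⊆
        (Finset.univ.filter fun i : Fin n => i.val < a ∨ r ≤ i.val) ×ˢ
        (Finset.univ.filter fun j : Fin n => j.val < b ∨ r ≤ j.val) := by
      intro p hp
      simp only [Finset.mem_filter, Finset.mem_univ, true_and] at hp
      rw [Finset.mem_product]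
      simp only [Finset.mem_filter, Finset.mem_univ, true_and]
      constructor
      · by_contra hh
        push_neg at hh
        exact hp (hrow p.1 (by omega) (by omega) p.2)
      · by_contra hh
        push_neg at hh
        exact hp (hcol p.2 (by omega) (by omega) p.1)
    have := Finset.card_le_card hsub
    rw [Finset.card_product, card_fin_filter_or' n a r ha hrn,
      card_fin_filter_or' n b r hb hrn] at this
    exact this
  have hdle : d ≤ matWeight c := hd.2 ⟨c, hcC, hcne, rfl⟩
  have hfin : (d : ℤ) ≤ ((a + (n - r)) * (b + (n - r)) : ℕ) := by
    exact_mod_cast le_trans hdle hwb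
  have hcast : (((a + (n - r)) * (b + (n - r)) : ℕ) : ℤ)
      = ((a : ℤ) + n - r) * ((b : ℤ) + n - r) := by
    push_cast [Nat.cast_sub hrn]
    ring
  rw [hcast] at hfin
  exact hfin
end

section
/- Let 1 ≤ r ≤ n be integers and let C₁ and C₂ be linear codes of length n over 𝔽_q, each with minimum distance at least n − r + 1. Let C be a nonzero linear subcode of C₁ ⊗ C₂ with dimension k (so 1 ≤ k ≤ r²) and minimum distance d. Then d ≤ ( ⌈√(r² − k + 1)⌉ + n − r )². -/
open scoped Classical

/-!
Put `s = ⌈√(r² − k + 1)⌉ ≤ r`, so that `r² − s² < k`. Fix an `r × r` block `A × A` and an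
`s × s` sub-block `B × B`. Since `k` exceeds the number of positions of the frame
`A × A \ B × B`, some nonzero `c ∈ C` vanishes on the frame. A row of `c` indexed by `A \ B`
then vanishes on the `r` positions of `A`, so it has weight at most `n − r` and must be zero;
likewise for columns. Hence `c` is supported on `(B ∪ Aᶜ) × (B ∪ Aᶜ)`, of size `(s + n − r)²`.
-/

theorem Submodule.exists_mem_ne_zero_forall_eq_zero {K M ι : Type*} [Field K] [AddCommGroup M]
    [Module K M] [Fintype ι] (V : Submodule K M) [FiniteDimensional K V]
    (f : ι → M →ₗ[K] K) (h : Fintype.card ι < Module.finrank K V) :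
    ∃ v ∈ V, v ≠ 0 ∧ ∀ i, f i v = 0 := by
  let φ : V →ₗ[K] ι → K := (LinearMap.pi f).comp V.subtype
  have hker : LinearMap.ker φ ≠ ⊥ :=
    LinearMap.ker_ne_bot_of_finrank_lt (by rwa [Module.finrank_fintype_fun_eq_card])
  obtain ⟨v, hv, hv0⟩ := Submodule.exists_mem_ne_zero_of_ne_bot hker
  exact ⟨v, v.2, by simpa using hv0, fun i => congrFun (LinearMap.mem_ker.mp hv) i⟩

theorem eq_zero_of_forall_eq_zero_of_card_lt {K ι : Type*} [Field K] [Fintype ι]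
    {C : Submodule K (ι → K)} {δ : ℕ}
    (hC : ∀ c ∈ C, c ≠ 0 → δ ≤ (Finset.univ.filter fun i => c i ≠ 0).card)
    {x : ι → K} (hx : x ∈ C) {S : Finset ι} (hS : ∀ i ∈ S, x i = 0)
    (hcard : Fintype.card ι < δ + S.card) : x = 0 := by
  by_contra hx0
  have hsupp : (Finset.univ.filter fun i => x i ≠ 0) ⊆ Sᶜ := fun i hi =>
    Finset.mem_compl.mpr fun hiS => (Finset.mem_filter.mp hi).2 (hS i hiS)
  have := (hC x hx hx0).trans (Finset.card_le_card hsupp)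
  rw [Finset.card_compl] at this
  have := Finset.card_le_univ S
  omega

namespace MemProd

variable {K : Type*} [Field K] {m n : ℕ} {C₁ : Submodule K (Fin m → K)}
  {C₂ : Submodule K (Fin n → K)} {c : Matrix (Fin m) (Fin n) K}
  {A₁ B₁ : Finset (Fin m)} {A₂ B₂ : Finset (Fin n)}

theorem mem_of_apply_ne_zero (hc : MemProd C₁ C₂ c)
    (hA₁ : ∀ x ∈ C₁, (∀ i ∈ A₁, x i = 0) → x = 0)
    (hA₂ : ∀ x ∈ C₂, (∀ j ∈ A₂, x j = 0) → x = 0)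
    (hframe : ∀ p ∈ A₁ ×ˢ A₂ \ B₁ ×ˢ B₂, c p.1 p.2 = 0) {i : Fin m} {j : Fin n}
    (hij : c i j ≠ 0) : i ∈ B₁ ∪ A₁ᶜ ∧ j ∈ B₂ ∪ A₂ᶜ := by
  have hframe' : ∀ i ∈ A₁, ∀ j ∈ A₂, (i ∈ B₁ → j ∉ B₂) → c i j = 0 := fun i hi j hj hB =>
    hframe (i, j) (by simp only [Finset.mem_sdiff, Finset.mem_product]; tauto)
  simp only [Finset.mem_union, Finset.mem_compl]
  constructor
  · by_contra! hi
    have hrow := hA₂ _ (hc.2 i) fun j' hj' => hframe' i hi.2 j' hj' fun h => absurd h hi.1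
    exact hij (congrFun hrow j)
  · by_contra! hj
    have hcol := hA₁ _ (hc.1 j) fun i' hi' => hframe' i' hi' j hj.2 fun _ => hj.1
    exact hij (congrFun hcol i)

theorem matWeight_le (hc : MemProd C₁ C₂ c)
    (hA₁ : ∀ x ∈ C₁, (∀ i ∈ A₁, x i = 0) → x = 0)
    (hA₂ : ∀ x ∈ C₂, (∀ j ∈ A₂, x j = 0) → x = 0)
    (hframe : ∀ p ∈ A₁ ×ˢ A₂ \ B₁ ×ˢ B₂, c p.1 p.2 = 0) :
    matWeight c ≤ (B₁ ∪ A₁ᶜ).card * (B₂ ∪ A₂ᶜ).card := by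
  rw [← Finset.card_product]
  refine Finset.card_le_card fun p hp => Finset.mem_product.mpr ?_
  exact hc.mem_of_apply_ne_zero hA₁ hA₂ hframe (Finset.mem_filter.mp hp).2

end MemProd

theorem Finset.card_union_compl_of_subset {α : Type*} [Fintype α] [DecidableEq α]
    {A B : Finset α} (hBA : B ⊆ A) : (B ∪ Aᶜ).card = B.card + (Fintype.card α - A.card) := by
  rw [Finset.card_union_of_disjoint (disjoint_compl_right.mono_left hBA),
    Finset.card_compl]

theorem Finset.card_product_self_sdiff_product_self {α : Type*} [DecidableEq α]
    {A B : Finset α} (hBA : B ⊆ A) : (A ×ˢ A \ B ×ˢ B).card = A.card ^ 2 - B.card ^ 2 := by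
  rw [Finset.card_sdiff_of_subset (Finset.product_subset_product hBA hBA),
    Finset.card_product, Finset.card_product, sq, sq]

theorem Real.le_natCeil_sqrt_sq (x : ℝ) : x ≤ (⌈√x⌉₊ : ℝ) ^ 2 := by
  calc x ≤ √x ^ 2 := by
        rcases le_or_gt x 0 with h | h
        · simpa [Real.sqrt_eq_zero'.mpr h] using h
        · exact (Real.sq_sqrt h.le).ge
    _ ≤ (⌈√x⌉₊ : ℝ) ^ 2 := pow_le_pow_left₀ (Real.sqrt_nonneg x) (Nat.le_ceil _) 2

theorem Nat.ceil_sqrt_le_of_le_sq {x : ℝ} {r : ℕ} (h : x ≤ (r : ℝ) ^ 2) : ⌈√x⌉₊ ≤ r :=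
  Nat.ceil_le.mpr ((Real.sqrt_le_sqrt h).trans_eq (Real.sqrt_sq (Nat.cast_nonneg r)))

theorem stmt_8_general (K : Type*) [Field K]
    (n r : ℕ) (hrn : r ≤ n)
    (C₁ C₂ : Submodule K (Fin n → K))
    (hC₁ : ∀ c ∈ C₁, c ≠ 0 → n - r + 1 ≤ (Finset.univ.filter fun i => c i ≠ 0).card)
    (hC₂ : ∀ c ∈ C₂, c ≠ 0 → n - r + 1 ≤ (Finset.univ.filter fun i => c i ≠ 0).card)
    (C : Submodule K (Matrix (Fin n) (Fin n) K))
    (hC : ∀ c ∈ C, MemProd C₁ C₂ c) (hCne : C ≠ ⊥)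
    (k : ℕ) (hk : Module.finrank K ↥C = k)
    (d : ℕ) (hd : IsLeast {w : ℕ | ∃ c ∈ C, c ≠ 0 ∧ matWeight c = w} d) :
    (d : ℝ) ≤
      ((⌈Real.sqrt ((r : ℝ) ^ 2 - (k : ℝ) + 1)⌉ : ℝ) + (n : ℝ) - (r : ℝ)) ^ 2 := by
  set s := ⌈√((r : ℝ) ^ 2 - k + 1)⌉₊ with hs
  have hk1 : (1 : ℝ) ≤ k := by exact_mod_cast hk ▸ Submodule.one_le_finrank_iff.mpr hCne
  have hsr : s ≤ r := Nat.ceil_sqrt_le_of_le_sq (by linarith)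
  have hrs : r ^ 2 < s ^ 2 + k := by
    have := Real.le_natCeil_sqrt_sq ((r : ℝ) ^ 2 - k + 1)
    exact_mod_cast (by linarith : (r : ℝ) ^ 2 < (s : ℝ) ^ 2 + k)
  obtain ⟨A, -, hA⟩ := Finset.exists_subset_card_eq (s := Finset.univ (α := Fin n))
    (by simpa using hrn)
  obtain ⟨B, hBA, hB⟩ := Finset.exists_subset_card_eq (hA ▸ hsr)
  obtain ⟨c, hcC, hc0, hcframe⟩ := C.exists_mem_ne_zero_forall_eq_zero
    (fun p : ↥(A ×ˢ A \ B ×ˢ B) => Matrix.entryLinearMap K K p.1.1 p.1.2) (by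
      rw [Fintype.card_coe, hk, Finset.card_product_self_sdiff_product_self hBA, hA, hB]
      have := Nat.pow_le_pow_left hsr 2
      omega)
  have hinfo : ∀ C' : Submodule K (Fin n → K),
      (∀ c ∈ C', c ≠ 0 → n - r + 1 ≤ (Finset.univ.filter fun i => c i ≠ 0).card) →
      ∀ x ∈ C', (∀ i ∈ A, x i = 0) → x = 0 := fun C' hC' x hx hxA =>
    eq_zero_of_forall_eq_zero_of_card_lt hC' hx hxA (by rw [Fintype.card_fin, hA]; omega)
  have hweight := (hC c hcC).matWeight_le (hinfo C₁ hC₁) (hinfo C₂ hC₂)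
    (fun p hp => hcframe ⟨p, hp⟩)
  rw [Finset.card_union_compl_of_subset hBA, hB, hA, Fintype.card_fin] at hweight
  have hdle : (d : ℝ) ≤ ((s + (n - r) : ℕ) : ℝ) ^ 2 := by
    exact_mod_cast (hd.2 ⟨c, hcC, hc0, rfl⟩).trans (hweight.trans_eq (sq _).symm)
  rw [← natCast_ceil_eq_intCast_ceil (Real.sqrt_nonneg _), ← hs]
  push_cast [hrn] at hdle
  linarith

/-- Let `1 ≤ r ≤ n`, let `C₁, C₂` be linear codes of length `n` over a
finite field, each of minimum distance at least `n − r + 1`, and let `C ⊆ C₁ ⊗ C₂` be a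
nonzero linear subcode of dimension `k` and minimum distance `d`.  Then
`d ≤ (⌈√(r² − k + 1)⌉ + n − r)²`. -/
theorem stmt_8 (q : ℕ) (K : Type*) [Field K] [Fintype K] (hq : Fintype.card K = q)
    (n r : ℕ) (h1 : 1 ≤ r) (hrn : r ≤ n)
    (C₁ C₂ : Submodule K (Fin n → K))
    (hC₁ : ∀ c ∈ C₁, c ≠ 0 → n - r + 1 ≤ (Finset.univ.filter fun i => c i ≠ 0).card)
    (hC₂ : ∀ c ∈ C₂, c ≠ 0 → n - r + 1 ≤ (Finset.univ.filter fun i => c i ≠ 0).card)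
    (C : Submodule K (Matrix (Fin n) (Fin n) K))
    (hC : ∀ c ∈ C, MemProd C₁ C₂ c) (hCne : C ≠ ⊥)
    (k : ℕ) (hk : Module.finrank K ↥C = k)
    (d : ℕ) (hd : IsLeast {w : ℕ | ∃ c ∈ C, c ≠ 0 ∧ matWeight c = w} d) :
    (d : ℝ) ≤
      ((⌈Real.sqrt ((r : ℝ) ^ 2 - (k : ℝ) + 1)⌉ : ℝ) + (n : ℝ) - (r : ℝ)) ^ 2 :=
  stmt_8_general K n r hrn C₁ C₂ hC₁ hC₂ C hC hCne k hk d hd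
end

section
/- Let C₁ ⊆ 𝔽_q^{n₁} and C₂ ⊆ 𝔽_q^{n₂} be linear codes, both of minimum distance δ, and suppose at least one of C₁, C₂ contains a codeword of Hamming weight exactly δ + 1. Then the next-to-minimum weight of C₁ ⊗ C₂ is δ(δ+1); that is: (i) C₁ ⊗ C₂ contains a codeword of Hamming weight exactly δ(δ+1), and (ii) every codeword of C₁ ⊗ C₂ of Hamming weight strictly greater than δ² has Hamming weight at least δ(δ+1). -/
open scoped Classical

/-- Hamming weight of a vector: the number of nonzero coordinates. -/
noncomputable def vecWeight {K : Type*} [Zero K] {n : ℕ} (c : Fin n → K) : ℕ :=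
  (Finset.univ.filter fun i => c i ≠ 0).card

lemma matWeight_outer {K : Type*} [Field K] {m n : ℕ} (a : Fin m → K) (b : Fin n → K) :
    matWeight (fun i j => a i * b j) = vecWeight a * vecWeight b := by
  classical
  simp only [matWeight, vecWeight]
  rw [← Finset.univ_product_univ]
  have h : (Finset.univ ×ˢ Finset.univ).filter (fun p : Fin m × Fin n => a p.1 * b p.2 ≠ 0)
      = (Finset.univ.filter fun i => a i ≠ 0) ×ˢ (Finset.univ.filter fun j => b j ≠ 0) := by
    ext p
    simp [mul_ne_zero_iff, and_assoc, and_left_comm]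
  rw [h, Finset.card_product]

lemma matWeight_eq_sum_rows {K : Type*} [Zero K] {m n : ℕ}
    (c : Matrix (Fin m) (Fin n) K) :
    matWeight c = ∑ i, vecWeight (fun j => c i j) := by
  classical
  simp only [matWeight, vecWeight, Finset.card_filter]
  rw [← Finset.univ_product_univ, Finset.sum_product]

lemma matWeight_eq_sum_cols {K : Type*} [Zero K] {m n : ℕ}
    (c : Matrix (Fin m) (Fin n) K) :
    matWeight c = ∑ j, vecWeight (fun i => c i j) := by
  classical
  simp only [matWeight, vecWeight, Finset.card_filter]
  rw [← Finset.univ_product_univ, Finset.sum_product]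
  exact Finset.sum_comm

/-- Let `C₁ ⊆ 𝔽_q^{n₁}` and `C₂ ⊆ 𝔽_q^{n₂}` be linear codes, both of
minimum distance `δ`, such that at least one of them contains a codeword of weight
exactly `δ + 1`.  Then the next-to-minimum weight of `C₁ ⊗ C₂` is `δ(δ+1)`: (i) `C₁ ⊗ C₂`
contains a codeword of weight exactly `δ(δ+1)`, and (ii) every codeword of `C₁ ⊗ C₂` of
weight `> δ²` has weight at least `δ(δ+1)`. -/
theorem stmt_9 (q : ℕ) (K : Type*) [Field K] [Fintype K] (hq : Fintype.card K = q)
    (n₁ n₂ : ℕ) (C₁ : Submodule K (Fin n₁ → K)) (C₂ : Submodule K (Fin n₂ → K))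
    (δ : ℕ)
    (hδ₁ : IsLeast {w : ℕ | ∃ c ∈ C₁, c ≠ 0 ∧ vecWeight c = w} δ)
    (hδ₂ : IsLeast {w : ℕ | ∃ c ∈ C₂, c ≠ 0 ∧ vecWeight c = w} δ)
    (hnext : (∃ c ∈ C₁, vecWeight c = δ + 1) ∨ (∃ c ∈ C₂, vecWeight c = δ + 1)) :
    (∃ c : Matrix (Fin n₁) (Fin n₂) K, MemProd C₁ C₂ c ∧ matWeight c = δ * (δ + 1)) ∧
    (∀ c : Matrix (Fin n₁) (Fin n₂) K, MemProd C₁ C₂ c → δ ^ 2 < matWeight c →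
      δ * (δ + 1) ≤ matWeight c) := by
  classical
  constructor
  · -- part (i)
    obtain ⟨a, ha, haw⟩ | ⟨b, hb, hbw⟩ := hnext
    · obtain ⟨b, hb, _, hbw⟩ := hδ₂.1
      refine ⟨fun i j => a i * b j, ⟨?_, ?_⟩, ?_⟩
      · intro j
        have h : (fun i => a i * b j) = b j • a := by
          funext i; simp [mul_comm]
        rw [h]; exact C₁.smul_mem _ ha
      · intro i
        have h : (fun j => a i * b j) = a i • b := by
          funext j; simp
        rw [h]; exact C₂.smul_mem _ hb
      · rw [matWeight_outer, haw, hbw, Nat.mul_comm]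
    · obtain ⟨a, ha, _, haw⟩ := hδ₁.1
      refine ⟨fun i j => a i * b j, ⟨?_, ?_⟩, ?_⟩
      · intro j
        have h : (fun i => a i * b j) = b j • a := by
          funext i; simp [mul_comm]
        rw [h]; exact C₁.smul_mem _ ha
      · intro i
        have h : (fun j => a i * b j) = a i • b := by
          funext j; simp
        rw [h]; exact C₂.smul_mem _ hb
      · rw [matWeight_outer, haw, hbw]
  · -- part (ii)
    intro c hc hgt
    set Rows : Finset (Fin n₁) := Finset.univ.filter (fun i => ∃ j, c i j ≠ 0) with hRdef
    set Cols : Finset (Fin n₂) := Finset.univ.filter (fun j => ∃ i, c i j ≠ 0) with hCdef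
    -- every nonzero row has weight ≥ δ
    have hrow_ge : ∀ i ∈ Rows, δ ≤ vecWeight (fun j => c i j) := by
      intro i hi
      rw [hRdef, Finset.mem_filter] at hi
      obtain ⟨_, j, hj⟩ := hi
      refine hδ₂.2 ⟨fun j => c i j, hc.2 i, ?_, rfl⟩
      intro h0; exact hj (congrFun h0 j)
    have hcol_ge : ∀ j ∈ Cols, δ ≤ vecWeight (fun i => c i j) := by
      intro j hj
      rw [hCdef, Finset.mem_filter] at hj
      obtain ⟨_, i, hi⟩ := hj
      refine hδ₁.2 ⟨fun i => c i j, hc.1 j, ?_, rfl⟩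
      intro h0; exact hi (congrFun h0 i)
    -- weight lower bounds via rows / columns
    have hW_rows : Rows.card * δ ≤ matWeight c := by
      rw [matWeight_eq_sum_rows]
      calc Rows.card * δ = ∑ _i ∈ Rows, δ := by rw [Finset.sum_const, smul_eq_mul]
        _ ≤ ∑ i ∈ Rows, vecWeight (fun j => c i j) := Finset.sum_le_sum hrow_ge
        _ ≤ ∑ i, vecWeight (fun j => c i j) :=
            Finset.sum_le_sum_of_subset (Finset.subset_univ _)
    have hW_cols : Cols.card * δ ≤ matWeight c := by
      rw [matWeight_eq_sum_cols]
      calc Cols.card * δ = ∑ _j ∈ Cols, δ := by rw [Finset.sum_const, smul_eq_mul]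
        _ ≤ ∑ j ∈ Cols, vecWeight (fun i => c i j) := Finset.sum_le_sum hcol_ge
        _ ≤ ∑ j, vecWeight (fun i => c i j) :=
            Finset.sum_le_sum_of_subset (Finset.subset_univ _)
    -- weight upper bound
    have hle : matWeight c ≤ Rows.card * Cols.card := by
      rw [matWeight, ← Finset.card_product]
      apply Finset.card_le_card
      intro p hp
      rw [Finset.mem_filter] at hp
      rw [Finset.mem_product, hRdef, hCdef]
      exact ⟨Finset.mem_filter.2 ⟨Finset.mem_univ _, ⟨p.2, hp.2⟩⟩,
        Finset.mem_filter.2 ⟨Finset.mem_univ _, ⟨p.1, hp.2⟩⟩⟩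
    -- c is nonzero, get a nonzero entry
    have hpos : 0 < matWeight c := lt_of_le_of_lt (Nat.zero_le _) hgt
    obtain ⟨p, hp⟩ := Finset.card_pos.mp hpos
    rw [Finset.mem_filter] at hp
    have hpne : c p.1 p.2 ≠ 0 := hp.2
    -- at least δ nonzero rows
    have hRδ : δ ≤ Rows.card := by
      have h1 : δ ≤ vecWeight (fun i => c i p.2) := by
        refine hδ₁.2 ⟨fun i => c i p.2, hc.1 p.2, ?_, rfl⟩
        intro h0; exact hpne (congrFun h0 p.1)
      refine le_trans h1 (Finset.card_le_card ?_)
      intro i hi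
      rw [Finset.mem_filter] at hi
      rw [hRdef, Finset.mem_filter]
      exact ⟨Finset.mem_univ _, ⟨p.2, hi.2⟩⟩
    have hCδ : δ ≤ Cols.card := by
      have h1 : δ ≤ vecWeight (fun j => c p.1 j) := by
        refine hδ₂.2 ⟨fun j => c p.1 j, hc.2 p.1, ?_, rfl⟩
        intro h0; exact hpne (congrFun h0 p.2)
      refine le_trans h1 (Finset.card_le_card ?_)
      intro j hj
      rw [Finset.mem_filter] at hj
      rw [hCdef, Finset.mem_filter]
      exact ⟨Finset.mem_univ _, ⟨p.1, hj.2⟩⟩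
    -- case split
    rcases eq_or_lt_of_le hRδ with hR' | hR'
    · rcases eq_or_lt_of_le hCδ with hC' | hC'
      · exfalso
        rw [← hR', ← hC'] at hle
        rw [pow_two] at hgt
        omega
      · calc δ * (δ + 1) = (δ + 1) * δ := Nat.mul_comm _ _
          _ ≤ Cols.card * δ := Nat.mul_le_mul_right _ hC'
          _ ≤ matWeight c := hW_cols
    · calc δ * (δ + 1) = (δ + 1) * δ := Nat.mul_comm _ _
        _ ≤ Rows.card * δ := Nat.mul_le_mul_right _ hR'
        _ ≤ matWeight c := hW_rows
end

section
/- Under the construction setup, let s ∈ F[x,y], let β ∈ Z_f and γ ∈ Z_g, and suppose that (x − β) divides s in F[x,y] and (y − γ) divides s in F[x,y]. Then (x − (β + γ))² divides the univariate polynomial s(g(x), f(x)) in F[x]. -/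
open Polynomial
open scoped Classical

/-!
Write `c = β + γ`. A `q`-linearized polynomial is additive, so `f(c) = f(β) + f(γ) = γ` and
`g(c) = c - f(c) = β`: the substitution `x ↦ g, y ↦ f` sends `c` to the point `(β, γ)`.
Writing `s = (x - β) a`, the image of `s` is `(g - β) · a(g, f)`, and both factors vanish at `c`.
The first does by the above; for the second, differentiating `(x - β) a = (y - γ) b` in `x`
and evaluating at `(β, γ)` gives `a(β, γ) = 0`.
-/

theorem Polynomial.eval_add_of_support_subset_powers {R : Type*} [CommSemiring R] {p : ℕ}
    [ExpChar R p] {f : R[X]} (hf : ∀ m ∈ f.support, ∃ i : ℕ, m = p ^ i) (x y : R) :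
    f.eval (x + y) = f.eval x + f.eval y := by
  simp only [eval_eq_sum, Polynomial.sum_def, ← Finset.sum_add_distrib]
  refine Finset.sum_congr rfl fun m hm => ?_
  obtain ⟨i, rfl⟩ := hf m hm
  rw [add_pow_expChar_pow, mul_add]

theorem Polynomial.eval_aeval_mvPolynomial {R σ : Type*} [CommSemiring R] (v : σ → R[X]) (c : R)
    (t : MvPolynomial σ R) :
    (MvPolynomial.aeval v t).eval c = MvPolynomial.eval (fun i => (v i).eval c) t := by
  rw [← coe_aeval_eq_eval, MvPolynomial.comp_aeval_apply]
  rfl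

namespace MvPolynomial

variable {R σ : Type*} [CommRing R]

theorem eval_eq_zero_of_X_sub_C_mul_eq {i j : σ} (hij : i ≠ j) {u : σ → R}
    {a b : MvPolynomial σ R} (h : (X i - C (u i)) * a = (X j - C (u j)) * b) :
    eval u a = 0 := by
  have hderiv := congrArg (eval u ∘ pderiv i) h
  simpa [pderiv_mul, pderiv_X, hij.symm] using hderiv

theorem sq_X_sub_C_dvd_aeval {i j : σ} (hij : i ≠ j) {u : σ → R} {s : MvPolynomial σ R}
    (hi : X i - C (u i) ∣ s) (hj : X j - C (u j) ∣ s) {v : σ → R[X]} {c : R}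
    (hv : ∀ k, (v k).eval c = u k) :
    (Polynomial.X - Polynomial.C c) ^ 2 ∣ aeval v s := by
  obtain ⟨a, rfl⟩ := hi
  obtain ⟨b, hb⟩ := hj
  have hvc : (fun k => (v k).eval c) = u := _root_.funext hv
  have hfirst : Polynomial.X - Polynomial.C c ∣ v i - Polynomial.C (u i) := by
    simp [dvd_iff_isRoot, hv]
  have hsecond : Polynomial.X - Polynomial.C c ∣ aeval v a := by
    rw [dvd_iff_isRoot, IsRoot, eval_aeval_mvPolynomial, hvc]
    exact eval_eq_zero_of_X_sub_C_mul_eq hij hb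
  rw [sq, map_mul, map_sub, aeval_X, aeval_C, Polynomial.algebraMap_eq]
  exact mul_dvd_mul hfirst hsecond

end MvPolynomial

theorem stmt_10_general (p e : ℕ) (hp : p.Prime)
    (F : Type*) [Field F] [CharP F p]
    (f : F[X])
    (hflin : ∀ m ∈ f.support, ∃ i : ℕ, m = (p ^ e) ^ i)
    (g : F[X]) (hg : g = X - f)
    (s : MvPolynomial (Fin 2) F) (β γ : F)
    (hβ : β ∈ f.roots.toFinset) (hγ : γ ∈ g.roots.toFinset)
    (hdvd₁ : (MvPolynomial.X 0 - MvPolynomial.C β) ∣ s)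
    (hdvd₂ : (MvPolynomial.X 1 - MvPolynomial.C γ) ∣ s) :
    (X - C (β + γ)) ^ 2 ∣ (MvPolynomial.aeval ![g, f] s : F[X]) := by
  have := Fact.mk hp
  subst hg
  rw [Multiset.mem_toFinset, mem_roots', IsRoot.def] at hβ hγ
  have hfγ : f.eval γ = γ := by
    rw [eval_sub, eval_X, sub_eq_zero] at hγ
    exact hγ.2.symm
  have hadditive : ∀ m ∈ f.support, ∃ i : ℕ, m = p ^ i := fun m hm => by
    obtain ⟨i, rfl⟩ := hflin m hm
    exact ⟨e * i, (pow_mul p e i).symm⟩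
  have hfc : f.eval (β + γ) = γ := by
    rw [eval_add_of_support_subset_powers hadditive, hβ.2, hfγ, zero_add]
  refine MvPolynomial.sq_X_sub_C_dvd_aeval (u := ![β, γ]) Fin.zero_ne_one hdvd₁ hdvd₂ ?_
  simp [Fin.forall_fin_two, hfc]

/-- Under the construction setup, let `s ∈ F[x,y]`, `β ∈ Z_f`,
`γ ∈ Z_g`, and suppose `(x − β) ∣ s` and `(y − γ) ∣ s` in `F[x,y]`.  Then
`(x − (β + γ))²` divides the univariate polynomial `s(g(x), f(x))` in `F[x]`. -/
theorem stmt_10 (p e : ℕ) (hp : p.Prime) (he : 0 < e)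
    (F : Type*) [Field F] [Fintype F] [CharP F p]
    (f : F[X])
    (hflin : ∀ m ∈ f.support, ∃ i : ℕ, m = (p ^ e) ^ i)
    (hdeg : 1 < f.natDegree)
    (ha0 : f.coeff 1 ≠ 0) (ha1 : f.coeff 1 ≠ 1)
    (g : F[X]) (hg : g = X - f)
    (hfs : (f.map (RingHom.id F)).Splits) (hgs : (g.map (RingHom.id F)).Splits)
    (s : MvPolynomial (Fin 2) F) (β γ : F)
    (hβ : β ∈ f.roots.toFinset) (hγ : γ ∈ g.roots.toFinset)
    (hdvd₁ : (MvPolynomial.X 0 - MvPolynomial.C β) ∣ s)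
    (hdvd₂ : (MvPolynomial.X 1 - MvPolynomial.C γ) ∣ s) :
    (X - C (β + γ)) ^ 2 ∣ (MvPolynomial.aeval ![g, f] s : F[X]) :=
  stmt_10_general p e hp F f hflin g hg s β γ hβ hγ hdvd₁ hdvd₂
end

section
/- Under the construction setup with 3 ≤ r ≤ 𝔫, set δ := 𝔫 − r + 1 and let C be the evaluation code on Z_f ⊕ Z_g of the F-subspace { w ∈ span_F(B_{r²}) : deg(w) ≤ (2r−4)·𝔫 + 1 }. Then C has dimension r² − 2 and minimum distance exactly δ(δ+2). -/
open Polynomial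
open scoped Classical

open Finset Lagrange

/-!
For `β ∈ Z_f` and `γ ∈ Z_g` the additivity of `f` and `g = X - f` gives `f (β + γ) = γ` and
`g (β + γ) = β`, and the sums `β + γ` are pairwise distinct. So evaluating `∑ c i j g ^ i f ^ j`
on `Z_f ⊕ Z_g` is evaluating the bivariate polynomial `∑ c i j x ^ i y ^ j` on the grid
`Z_f × Z_g`, injectively since `r ≤ 𝔫`. Because `g + f = X`, the degree bound `(2r - 4)𝔫 + 1`
amounts to the two linear conditions `c_aa = 0`, `c_ab = c_ba` on the heaviest coefficients
(`a = r - 1`, `b = r - 2`), whence the dimension `r² - 2`.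

The weight `δ(δ + 2)` is attained by `A(x) B(y) (x + y)`, where `A` and `B` vanish at `r - 2`
nonzero roots. For the lower bound count zeros column by column. If `c_ab = 0`, the top nonzero
row gives a product bound. Otherwise row `a` has degree `r - 2`, so at least `δ + 1` columns are
nonzero; with `δ + 2` of them each has at least `δ` nonzeros, and with exactly `δ + 1` the
polynomial vanishes on `r - 2` whole columns and factors as `B(y) (P(x) + (x + y) V(x))` with
`deg P, deg V ≤ r - 2`, whose zeros on the remaining columns are counted directly.
-/

namespace Polynomial

section Field

variable {F : Type*} [Field F]

theorem card_filter_eval_eq_zero_le (s : Finset F) {q : F[X]} (hq : q ≠ 0) :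
    #(s.filter fun x => q.eval x = 0) ≤ q.natDegree :=
  card_le_degree_of_subset_roots fun x hx => by
    simp only [Finset.mem_val, Finset.mem_filter] at hx
    exact (mem_roots hq).2 hx.2

theorem card_le_card_filter_eval_ne_zero_add (s : Finset F) {q : F[X]} (hq : q ≠ 0) :
    #s ≤ #(s.filter fun x => q.eval x ≠ 0) + q.natDegree := by
  have := card_filter_eval_eq_zero_le s hq
  have := card_filter_add_card_filter_not (s := s) (p := fun x => q.eval x = 0)
  simp only [ne_eq] at this ⊢
  omega

theorem coeff_mul_X_add_C_natDegree_succ {B : F[X]} (hB : B.Monic) (u v : F) :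
    (B * (C v * X + C u)).coeff (B.natDegree + 1) = v := by
  rw [mul_add, ← mul_assoc, coeff_add, coeff_mul_X, coeff_mul_C, coeff_mul_C,
    hB.coeff_natDegree, coeff_eq_zero_of_natDegree_lt (Nat.lt_succ_self _), one_mul, zero_mul,
    add_zero]

theorem nodal_dvd_of_eval_eq_zero {s : Finset F} {q : F[X]} (h : ∀ x ∈ s, q.eval x = 0) :
    nodal s id ∣ q := by
  rw [nodal_eq]
  exact Finset.prod_dvd_of_coprime
    ((pairwise_coprime_X_sub_C Function.injective_id).set_pairwise _)
    fun x hx => dvd_iff_isRoot.2 (h x hx)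

theorem eval_nodal_id_eq_zero_iff {S : Finset F} {x : F} : (nodal S id).eval x = 0 ↔ x ∈ S := by
  simp [eval_nodal, prod_eq_zero_iff, sub_eq_zero]

theorem exists_eq_mul_X_add_C_of_dvd {B q : F[X]} (hB : B ≠ 0) (hdvd : B ∣ q)
    (hdeg : q.natDegree ≤ B.natDegree + 1) : ∃ u v : F, q = B * (C v * X + C u) := by
  obtain ⟨t, rfl⟩ := hdvd
  rcases eq_or_ne t 0 with rfl | ht
  · exact ⟨0, 0, by simp⟩
  rw [natDegree_mul hB ht] at hdeg
  exact ⟨t.coeff 0, t.coeff 1, by rw [← eq_X_add_C_of_natDegree_le_one (by omega)]⟩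

theorem natDegree_ofFn_le {n k : ℕ} {v : Fin n → F} (h : ∀ j : Fin n, k < j → v j = 0) :
    (ofFn n v).natDegree ≤ k := by
  rw [natDegree_le_iff_coeff_eq_zero]
  intro N hN
  by_cases hNn : N < n
  · exact (ofFn_coeff_eq_val_of_lt _ hNn).trans (h ⟨N, hNn⟩ hN)
  · exact ofFn_coeff_eq_zero_of_ge _ (not_lt.1 hNn)

theorem natDegree_ofFn_lt_of_ne_zero {n k : ℕ} {v : Fin n → F} (hv : ofFn n v ≠ 0)
    (h : ∀ j : Fin n, k ≤ j → v j = 0) : (ofFn n v).natDegree < k := by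
  by_contra! hk
  have hlt : (ofFn n v).natDegree < n := ofFn_natDegree_lt (Nat.one_le_iff_ne_zero.2
    (ne_zero_of_ofFn_ne_zero hv)) v
  apply leadingCoeff_ne_zero.2 hv
  rw [leadingCoeff, ofFn_coeff_eq_val_of_lt v hlt]
  exact h _ hk

theorem eval_ofFn {n : ℕ} (v : Fin n → F) (x : F) :
    (ofFn n v).eval x = ∑ i, v i * x ^ (i : ℕ) := by
  simp [ofFn_eq_sum_monomial, eval_finsetSum]

theorem eval_eq_sum_fin {n : ℕ} {q : F[X]} (hq : q.natDegree < n) (x : F) :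
    q.eval x = ∑ i : Fin n, q.coeff i * x ^ (i : ℕ) := by
  rw [eval_eq_sum_range' hq, Fin.sum_univ_eq_sum_range (fun i => q.coeff i * x ^ i)]

end Field

section Linearized

variable {R : Type*} [CommRing R] {p : ℕ} {f : R[X]}

theorem eval_add_of_forall_mem_support [Fact p.Prime] [CharP R p]
    (hf : ∀ m ∈ f.support, ∃ k, m = p ^ k) (x y : R) :
    f.eval (x + y) = f.eval x + f.eval y := by
  simp only [eval_eq_sum, sum_def, ← sum_add_distrib, ← mul_add]
  refine sum_congr rfl fun m hm => ?_
  obtain ⟨k, rfl⟩ := hf m hm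
  rw [add_pow_char_pow]

theorem derivative_eq_C_coeff_one [CharP R p] (hf : ∀ m ∈ f.support, ∃ k, m = p ^ k) :
    derivative f = C (f.coeff 1) := by
  ext k
  rw [coeff_derivative, coeff_C]
  split_ifs with hk
  · simp [hk]
  by_cases hmem : k + 1 ∈ f.support
  · obtain ⟨j, hj⟩ := hf _ hmem
    have hj0 : j ≠ 0 := by rintro rfl; simp at hj; omega
    have hcast : ((k : R) + 1) = 0 := by
      exact_mod_cast hj ▸ (by simp [zero_pow hj0] : ((p ^ j : ℕ) : R) = 0)
    rw [hcast, mul_zero]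
  · rw [notMem_support_iff.1 hmem, zero_mul]

end Linearized

section RootGrid

variable {F : Type*} [Field F] {f : F[X]}

theorem card_roots_toFinset_of_derivative_eq_C {u : F} (hs : f.Splits) (h : derivative f = C u)
    (hu : u ≠ 0) : #f.roots.toFinset = f.natDegree := by
  have hsep : f.Separable :=
    ⟨0, C u⁻¹, by rw [h, zero_mul, zero_add, ← C_mul, inv_mul_cancel₀ hu, C_1]⟩
  rw [Multiset.toFinset_card_of_nodup (nodup_roots hsep), splits_iff_card_roots.1 hs]

variable (hadd : ∀ x y, f.eval (x + y) = f.eval x + f.eval y)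
include hadd

theorem eval_add_X_sub (x y : F) : (X - f).eval (x + y) = (X - f).eval x + (X - f).eval y := by
  simp only [eval_sub, eval_X, hadd]
  ring

theorem zero_mem_roots_toFinset (hf : f ≠ 0) : (0 : F) ∈ f.roots.toFinset := by
  have h0 : f.eval 0 = 0 := by simpa using hadd 0 0
  simp [mem_roots hf, h0]

theorem eval_add_of_mem_roots : ∀ z ∈ f.roots.toFinset ×ˢ (X - f).roots.toFinset,
    (X - f).eval (z.1 + z.2) = z.1 ∧ f.eval (z.1 + z.2) = z.2 := by
  rintro ⟨β, γ⟩ hz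
  simp only [mem_product, Multiset.mem_toFinset, mem_roots', IsRoot, eval_sub, eval_X,
    sub_eq_zero] at hz ⊢
  rw [hadd, hz.1.2, ← hz.2.2]
  simp

theorem injOn_add_roots :
    Set.InjOn (fun z : F × F => z.1 + z.2) ↑(f.roots.toFinset ×ˢ (X - f).roots.toFinset) := by
  rintro ⟨β, γ⟩ hz ⟨β', γ'⟩ hz' (hsum : β + γ = β' + γ')
  simp only [coe_product, Set.mem_prod, mem_coe, Multiset.mem_toFinset, mem_roots', IsRoot,
    eval_sub, eval_X, sub_eq_zero] at hz hz'
  have hsub (x y : F) : f.eval (x - y) = f.eval x - f.eval y :=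
    (AddMonoidHom.mk' f.eval hadd).map_sub x y
  have hδ : β - β' = γ' - γ := by linear_combination hsum
  have hβ : β = β' := by
    have h1 : f.eval (β - β') = 0 := by rw [hsub, hz.1.2, hz'.1.2, sub_zero]
    have h2 : f.eval (γ' - γ) = γ' - γ := by rw [hsub, ← hz.2.2, ← hz'.2.2]
    rw [← sub_eq_zero, hδ, ← h2, ← hδ, h1]
  exact Prod.ext hβ (by rw [hβ] at hsum; exact add_left_cancel hsum)

end RootGrid

end Polynomial

section BivariateEvaluation

variable {F : Type*} [Field F] {r : ℕ}

/-- `c` is the coefficient matrix of the bivariate polynomial `∑ c (i, j) x ^ i y ^ j`. -/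
noncomputable def bivEval {A : Type*} [CommRing A] [Algebra F A] (x y : A) :
    (Fin r × Fin r → F) →ₗ[F] A :=
  Fintype.linearCombination F fun z => x ^ (z.1 : ℕ) * y ^ (z.2 : ℕ)

theorem bivEval_apply {A : Type*} [CommRing A] [Algebra F A] (x y : A) (c : Fin r × Fin r → F) :
    bivEval x y c = ∑ z, c z • (x ^ (z.1 : ℕ) * y ^ (z.2 : ℕ)) :=
  Fintype.linearCombination_apply F _ c

theorem span_Bset (f g : F[X]) :
    Submodule.span F (Bset f g r) = LinearMap.range (bivEval (r := r) g f) := by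
  rw [bivEval, Fintype.range_linearCombination]
  congr 1
  ext w
  constructor
  · rintro ⟨i, j, hi, hj, rfl⟩
    exact ⟨(⟨i, hi⟩, ⟨j, hj⟩), rfl⟩
  · rintro ⟨z, rfl⟩
    exact ⟨z.1, z.2, z.1.isLt, z.2.isLt, rfl⟩

theorem eval_bivEval (x y : F[X]) (c : Fin r × Fin r → F) (z : F) :
    (bivEval x y c).eval z = bivEval (x.eval z) (y.eval z) c := by
  simp [bivEval_apply, eval_finsetSum, eval_smul, eval_mul, eval_pow]

theorem bivEval_coeff_mul_coeff {P Q : F[X]} (hP : P.natDegree < r) (hQ : Q.natDegree < r)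
    (x y : F) :
    bivEval x y (fun z : Fin r × Fin r => P.coeff z.1 * Q.coeff z.2) = P.eval x * Q.eval y := by
  rw [bivEval_apply, Fintype.sum_prod_type, eval_eq_sum_fin hP, eval_eq_sum_fin hQ, sum_mul_sum]
  exact sum_congr rfl fun i _ => sum_congr rfl fun j _ => by rw [smul_eq_mul]; ring

/-- The polynomial in `y` multiplying `x ^ i`. -/
noncomputable def rowPoly (c : Fin r × Fin r → F) (i : Fin r) : F[X] :=
  ofFn r fun j => c (i, j)

/-- The polynomial in `x` obtained by fixing `y = γ`. -/
noncomputable def colPoly (c : Fin r × Fin r → F) (γ : F) : F[X] :=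
  ofFn r fun i => (rowPoly c i).eval γ

theorem eval_colPoly (c : Fin r × Fin r → F) (β γ : F) :
    (colPoly c γ).eval β = bivEval β γ c := by
  simp only [colPoly, rowPoly, eval_ofFn, bivEval_apply, Fintype.sum_prod_type, smul_eq_mul,
    Finset.sum_mul]
  exact Finset.sum_congr rfl fun i _ => Finset.sum_congr rfl fun j _ => by ring

theorem coeff_colPoly (c : Fin r × Fin r → F) (γ : F) (i : Fin r) :
    (colPoly c γ).coeff i = (rowPoly c i).eval γ :=
  ofFn_coeff_eq_val_of_lt _ i.isLt

theorem coeff_rowPoly (c : Fin r × Fin r → F) (i j : Fin r) :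
    (rowPoly c i).coeff j = c (i, j) :=
  ofFn_coeff_eq_val_of_lt _ j.isLt

theorem natDegree_rowPoly_lt (c : Fin r × Fin r → F) (i : Fin r) :
    (rowPoly c i).natDegree < r :=
  ofFn_natDegree_lt (Nat.one_le_of_lt i.isLt) _

theorem natDegree_colPoly_lt (c : Fin r × Fin r → F) (γ : F) (hr : 0 < r) :
    (colPoly c γ).natDegree < r :=
  ofFn_natDegree_lt hr _

theorem natDegree_rowPoly_lt_of_ne_zero {c : Fin r × Fin r → F} {i : Fin r} {k : ℕ}
    (hi : rowPoly c i ≠ 0) (h : ∀ j : Fin r, k ≤ j → c (i, j) = 0) :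
    (rowPoly c i).natDegree < k :=
  natDegree_ofFn_lt_of_ne_zero hi h

theorem rowPoly_eq_zero_iff {c : Fin r × Fin r → F} {i : Fin r} :
    rowPoly c i = 0 ↔ ∀ j, c (i, j) = 0 := by
  rw [rowPoly, ← ofFn_zero r, (injective_ofFn r).eq_iff, funext_iff]
  rfl

theorem eq_zero_of_bivEval_eq_zero {c : Fin r × Fin r → F} {s t : Finset F} (hs : r ≤ #s)
    (ht : r ≤ #t) (h : ∀ β ∈ s, ∀ γ ∈ t, bivEval β γ c = 0) : c = 0 := by
  ext ⟨i, j⟩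
  have hcol (γ) (hγ : γ ∈ t) : colPoly c γ = 0 :=
    eq_zero_of_natDegree_lt_card_of_eval_eq_zero' _ s
      (fun β hβ => (eval_colPoly c β γ).trans (h β hβ γ hγ))
      ((natDegree_colPoly_lt c γ i.pos).trans_le hs)
  have hrow : rowPoly c i = 0 :=
    eq_zero_of_natDegree_lt_card_of_eval_eq_zero' _ t
      (fun γ hγ => by rw [← coeff_colPoly, hcol γ hγ, coeff_zero])
      ((natDegree_rowPoly_lt c i).trans_le ht)
  exact rowPoly_eq_zero_iff.1 hrow j

end BivariateEvaluation

section GridWeight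

variable {F : Type*} [Field F] {r : ℕ} {s t : Finset F} {c : Fin r × Fin r → F}

noncomputable def gridWeight (s t : Finset F) (c : Fin r × Fin r → F) : ℕ :=
  #((s ×ˢ t).filter fun z => bivEval z.1 z.2 c ≠ 0)

theorem gridWeight_mono {t' : Finset F} (h : t' ⊆ t) : gridWeight s t' c ≤ gridWeight s t c :=
  card_le_card (filter_subset_filter _ (product_subset_product_right h))

theorem gridWeight_eq_sum :
    gridWeight s t c = ∑ γ ∈ t, #(s.filter fun β => bivEval β γ c ≠ 0) := by
  simp only [gridWeight, card_filter, sum_product_right]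

theorem mul_le_gridWeight {Γ : Finset F} (hΓ : Γ ⊆ t) {k : ℕ}
    (h : ∀ γ ∈ Γ, k ≤ #(s.filter fun β => bivEval β γ c ≠ 0)) : #Γ * k ≤ gridWeight s t c := by
  rw [← smul_eq_mul, ← sum_const]
  exact (sum_le_sum h).trans (gridWeight_eq_sum (t := Γ) ▸ gridWeight_mono hΓ)

theorem card_le_card_filter_bivEval_ne_zero_add {γ : F} (hγ : colPoly c γ ≠ 0) :
    #s ≤ #(s.filter fun β => bivEval β γ c ≠ 0) + (colPoly c γ).natDegree := by
  simpa only [eval_colPoly] using card_le_card_filter_eval_ne_zero_add s hγ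

theorem card_le_card_filter_colPoly_ne_zero_add {i : Fin r} (hi : rowPoly c i ≠ 0) :
    #t ≤ #(t.filter fun γ => colPoly c γ ≠ 0) + (rowPoly c i).natDegree := by
  refine (card_le_card_filter_eval_ne_zero_add t hi).trans (Nat.add_le_add_right
    (card_le_card (monotone_filter_right _ fun γ _ hγ hcol => hγ ?_)) _)
  rw [← coeff_colPoly, hcol, coeff_zero]

theorem mul_le_gridWeight_of_top_row {i : Fin r} (hi : rowPoly c i ≠ 0)
    (htop : ∀ i', i < i' → rowPoly c i' = 0) :
    (#t - (rowPoly c i).natDegree) * (#s - i) ≤ gridWeight s t c := by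
  have hdeg (γ) : (colPoly c γ).natDegree ≤ i := natDegree_ofFn_le fun i' hi' => by
    rw [htop i' hi', eval_zero]
  have hcols := card_le_card_filter_colPoly_ne_zero_add (t := t) hi
  refine (Nat.mul_le_mul_right _ (by omega)).trans
    (mul_le_gridWeight (filter_subset (fun γ => colPoly c γ ≠ 0) t) fun γ hγ => ?_)
  have := card_le_card_filter_bivEval_ne_zero_add (s := s) (mem_filter.1 hγ).2
  have := hdeg γ
  omega

end GridWeight

section LinearPencil

variable {F : Type*} [Field F] {m b : ℕ} {s Γ : Finset F} {P V : F[X]}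

/-- When `P` and `V` share `b ≥ deg P, deg V` roots in `s`, both are multiples of the same
nodal polynomial `D`, so `P x + (x + y) V x = D x * (μ + κ (x + y))` vanishes off the roots of
`D` only on one antidiagonal `x + y = const`, which meets `s × Γ` at most once. -/
theorem card_filter_eq_zero_le_one_of_common_roots
    (hinj : Set.InjOn (fun z : F × F => z.1 + z.2) ↑(s ×ˢ Γ)) (hV : V ≠ 0) (hVdeg : V.natDegree ≤ b)
    (hPdeg : P.natDegree ≤ b) (hcommon : b ≤ #(s.filter fun β => P.eval β = 0 ∧ V.eval β = 0)) :
    #((s ×ˢ Γ).filter fun z => V.eval z.1 ≠ 0 ∧ P.eval z.1 + (z.1 + z.2) * V.eval z.1 = 0)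
      ≤ 1 := by
  obtain ⟨D, hD, hDdeg, hDV, hDP⟩ : ∃ D : F[X], D.Monic ∧ b ≤ D.natDegree ∧ D ∣ V ∧ D ∣ P :=
    ⟨nodal (s.filter fun β => P.eval β = 0 ∧ V.eval β = 0) id, nodal_monic,
      by rwa [natDegree_nodal],
      nodal_dvd_of_eval_eq_zero fun x hx => (mem_filter.1 hx).2.2,
      nodal_dvd_of_eval_eq_zero fun x hx => (mem_filter.1 hx).2.1⟩
  have hVD := eq_leadingCoeff_mul_of_monic_of_dvd_of_natDegree_le hD hDV (hVdeg.trans hDdeg)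
  have hPD := eq_leadingCoeff_mul_of_monic_of_dvd_of_natDegree_le hD hDP (hPdeg.trans hDdeg)
  have hκ : V.leadingCoeff ≠ 0 := leadingCoeff_ne_zero.2 hV
  have hline (z) (hz : z ∈ (s ×ˢ Γ).filter fun z =>
      V.eval z.1 ≠ 0 ∧ P.eval z.1 + (z.1 + z.2) * V.eval z.1 = 0) :
      z.1 + z.2 = -(P.leadingCoeff / V.leadingCoeff) := by
    obtain ⟨-, hVz, hz⟩ := mem_filter.1 hz
    rw [hVD] at hVz
    rw [hVD, hPD] at hz
    simp only [eval_mul, eval_C] at hVz hz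
    have hD : D.eval z.1 ≠ 0 := right_ne_zero_of_mul hVz
    have : P.leadingCoeff + (z.1 + z.2) * V.leadingCoeff = 0 := by
      apply mul_right_cancel₀ hD
      linear_combination hz
    field_simp
    linear_combination this
  exact card_le_one.2 fun z hz z' hz' =>
    hinj (mem_filter.1 hz).1 (mem_filter.1 hz').1 ((hline z hz).trans (hline z' hz').symm)

theorem card_filter_eq_zero_le_card_filter_ne_zero :
    #((s ×ˢ Γ).filter fun z => V.eval z.1 ≠ 0 ∧ P.eval z.1 + (z.1 + z.2) * V.eval z.1 = 0) ≤
      #(s.filter fun β => V.eval β ≠ 0) := by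
  refine card_le_card_of_injOn Prod.fst (fun z hz => ?_) fun z hz z' hz' hzz' => ?_
  · obtain ⟨hz, hVz, -⟩ := mem_filter.1 hz
    exact mem_filter.2 ⟨(mem_product.1 hz).1, hVz⟩
  · obtain ⟨-, hVz, hez⟩ := mem_filter.1 (mem_coe.1 hz)
    obtain ⟨-, -, hez'⟩ := mem_filter.1 (mem_coe.1 hz')
    rw [← hzz'] at hez'
    refine Prod.ext hzz' (add_left_cancel (a := z.1) (mul_right_cancel₀ hVz ?_))
    linear_combination hez - hez'

/-- Each common root of `P` and `V` kills a whole row, any other `β` at most one point `(β, γ)`;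
with `b` common roots only one point off those rows is killed. -/
theorem le_card_filter_ne_zero (hs : #s = m + b + 1) (hΓ : #Γ = m + 1)
    (hinj : Set.InjOn (fun z : F × F => z.1 + z.2) ↑(s ×ˢ Γ)) (hV : V ≠ 0) (hVdeg : V.natDegree ≤ b)
    (hPdeg : P.natDegree ≤ b) :
    m * (m + 2) ≤ #((s ×ˢ Γ).filter fun z => P.eval z.1 + (z.1 + z.2) * V.eval z.1 ≠ 0) := by
  set e : F × F → F := fun z => P.eval z.1 + (z.1 + z.2) * V.eval z.1
  set common := s.filter fun β => P.eval β = 0 ∧ V.eval β = 0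
  set extra := (s ×ˢ Γ).filter fun z => V.eval z.1 ≠ 0 ∧ e z = 0
  have hsplit := card_filter_add_card_filter_not (s := s ×ˢ Γ) (p := fun z => e z = 0)
  have hzeros : #((s ×ˢ Γ).filter fun z => e z = 0) ≤ #common * (m + 1) + #extra := by
    rw [← hΓ, ← card_product]
    refine (card_le_card fun z hz => ?_).trans (card_union_le _ _)
    obtain ⟨hz, hez⟩ := mem_filter.1 hz
    obtain ⟨hβ, hγ⟩ := mem_product.1 hz
    by_cases hVz : V.eval z.1 = 0
    · refine mem_union_left _ (mem_product.2 ⟨mem_filter.2 ⟨hβ, ?_, hVz⟩, hγ⟩)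
      simpa [e, hVz] using hez
    · exact mem_union_right _ (mem_filter.2 ⟨hz, hVz, hez⟩)
  have hextra : #extra ≤ #(s.filter fun β => V.eval β ≠ 0) :=
    card_filter_eq_zero_le_card_filter_ne_zero
  have hcommonV : #common ≤ #(s.filter fun β => V.eval β = 0) :=
    card_le_card (monotone_filter_right s fun β _ (h : P.eval β = 0 ∧ V.eval β = 0) => h.2)
  have hcommon : #common + #(s.filter fun β => V.eval β ≠ 0) ≤ #s := by
    have := card_filter_add_card_filter_not (s := s) (p := fun β => V.eval β = 0)
    simp only [ne_eq] at this ⊢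
    omega
  have hcommonb : #common ≤ b := (hcommonV.trans (card_filter_eval_eq_zero_le s hV)).trans hVdeg
  rw [card_product, hs, hΓ] at hsplit
  simp only [ne_eq] at hsplit ⊢
  rcases lt_or_ge #common b with hlt | hge
  · have := Nat.mul_le_mul_left m (Nat.succ_le_of_lt hlt)
    nlinarith
  · have := card_filter_eq_zero_le_one_of_common_roots hinj hV hVdeg hPdeg hge
    have : #common = b := le_antisymm hcommonb hge
    nlinarith

end LinearPencil

section LowerBound

variable {F : Type*} [Field F] {r m : ℕ} {s t : Finset F} {c : Fin r × Fin r → F} {a b : Fin r}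

theorem exists_top_row (hc : c ≠ 0) :
    ∃ i, rowPoly c i ≠ 0 ∧ ∀ i', i < i' → rowPoly c i' = 0 := by
  have hne : (univ.filter fun i => rowPoly c i ≠ 0).Nonempty := by
    obtain ⟨⟨i, j⟩, hij⟩ := Function.ne_iff.1 hc
    exact ⟨i, mem_filter.2 ⟨mem_univ _, fun h => hij (rowPoly_eq_zero_iff.1 h j)⟩⟩
  refine ⟨_, (mem_filter.1 (max'_mem _ hne)).2, fun i' hi' => ?_⟩
  by_contra h
  exact (le_max' _ i' (mem_filter.2 ⟨mem_univ _, h⟩)).not_gt hi'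

theorem le_gridWeight_of_heavy_eq_zero (hs : #s = m + a) (ht : #t = m + a)
    (ha : (a : ℕ) + 1 = r) (hb : (b : ℕ) + 2 = r) (hc : c ≠ 0)
    (haa : c (a, a) = 0) (hab : c (a, b) = 0) (hba : c (b, a) = 0) :
    m * (m + 2) ≤ gridWeight s t c := by
  obtain ⟨i, hi, htop⟩ := exists_top_row hc
  refine le_trans ?_ (mul_le_gridWeight_of_top_row hi htop)
  rw [hs, ht]
  have hlt := natDegree_rowPoly_lt c i
  have hcases : (i : ℕ) < b ∨ i = b ∨ i = a := by simp only [Fin.ext_iff]; omega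
  rcases hcases with hib | rfl | rfl
  · exact Nat.mul_le_mul (by omega) (by omega)
  · have : (rowPoly c i).natDegree < a := natDegree_rowPoly_lt_of_ne_zero hi fun j hj => by
      obtain rfl : j = a := Fin.ext (by omega)
      exact hba
    calc m * (m + 2) ≤ (m + 1) * (m + 1) := by nlinarith
      _ ≤ _ := Nat.mul_le_mul (by omega) (by omega)
  · have : (rowPoly c i).natDegree < b := natDegree_rowPoly_lt_of_ne_zero hi fun j hj => by
      obtain rfl | rfl : j = b ∨ j = i := by simp only [Fin.ext_iff]; omega
      exacts [hab, haa]
    rw [mul_comm]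
    exact Nat.mul_le_mul (by omega) (by omega)

theorem rowPoly_eq_nodal_mul {Z : Finset F} {i : Fin r} (hZ : ∀ γ ∈ Z, (rowPoly c i).eval γ = 0)
    (hZcard : #Z + 2 = r) (ha : (a : ℕ) + 1 = r) :
    ∃ u, rowPoly c i = nodal Z id * (C (c (i, a)) * X + C u) := by
  obtain ⟨u, v, h⟩ := exists_eq_mul_X_add_C_of_dvd nodal_ne_zero (nodal_dvd_of_eval_eq_zero hZ)
    (by rw [natDegree_nodal]; have := natDegree_rowPoly_lt c i; omega)
  have hv := coeff_mul_X_add_C_natDegree_succ nodal_monic u v (B := nodal Z id)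
  rw [← h, natDegree_nodal, show #Z + 1 = (a : ℕ) by omega, coeff_rowPoly] at hv
  exact ⟨u, hv ▸ h⟩

theorem exists_bivEval_eq_nodal_mul {Z : Finset F} (hZ : ∀ γ ∈ Z, colPoly c γ = 0)
    (hZcard : #Z = b) (ha : (a : ℕ) + 1 = r) (hb : (b : ℕ) + 2 = r) (haa : c (a, a) = 0)
    (htie : c (a, b) = c (b, a)) (hab : c (a, b) ≠ 0) :
    ∃ P V : F[X], V ≠ 0 ∧ V.natDegree ≤ b ∧ P.natDegree ≤ b ∧
      ∀ β γ, bivEval β γ c = (nodal Z id).eval γ * (P.eval β + (β + γ) * V.eval β) := by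
  have hrow (i : Fin r) := rowPoly_eq_nodal_mul (a := a) (i := i) (Z := Z)
    (fun γ hγ => by rw [← coeff_colPoly, hZ γ hγ, coeff_zero]) (by omega) ha
  choose u hu using hrow
  set V := ofFn r fun i => c (i, a)
  set U := ofFn r u
  have hua : u a = c (a, b) := by
    have := congrArg (coeff · b) (hu a)
    simp only [coeff_rowPoly, haa, map_zero, zero_mul, zero_add, coeff_mul_C] at this
    rw [this, ← hZcard, ← natDegree_nodal (v := id), nodal_monic.coeff_natDegree, one_mul]
  have hVb : V.coeff b = c (a, b) := by rw [ofFn_coeff_eq_val_of_lt _ (by omega), htie]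
  have hV : V ≠ 0 := fun h => hab (by rw [← hVb, h, coeff_zero])
  have hVdeg : V.natDegree ≤ b := natDegree_ofFn_le fun j hj => by
    obtain rfl : j = a := Fin.ext (by omega)
    exact haa
  refine ⟨U - X * V, V, hV, hVdeg, ?_, fun β γ => ?_⟩
  · have hU : U.natDegree < r := ofFn_natDegree_lt (by omega) u
    have hdeg : (U - X * V).natDegree ≤ (a : ℕ) :=
      (natDegree_sub_le _ _).trans (max_le (by omega) (by rw [natDegree_X_mul hV]; omega))
    have hcoeff : (U - X * V).coeff a = 0 := by
      rw [coeff_sub, ofFn_coeff_eq_val_of_lt _ a.isLt, hua, sub_eq_zero,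
        show (a : ℕ) = b + 1 by omega, coeff_X_mul, hVb]
    simpa [show (a : ℕ) - 1 = b by omega] using natDegree_le_pred hdeg hcoeff
  · have hPV : (U - X * V).eval β + (β + γ) * V.eval β = U.eval β + γ * V.eval β := by
      simp only [eval_sub, eval_mul, eval_X]; ring
    rw [← eval_colPoly, colPoly, eval_ofFn, hPV, eval_ofFn, eval_ofFn, Finset.mul_sum,
      ← sum_add_distrib, Finset.mul_sum]
    refine sum_congr rfl fun i _ => ?_
    rw [hu i]
    simp only [eval_mul, eval_add, eval_C, eval_X]
    ring

theorem le_gridWeight_of_card_filter_colPoly_ne_zero_eq (hs : #s = m + a) (ht : #t = m + a)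
    (hinj : Set.InjOn (fun z : F × F => z.1 + z.2) ↑(s ×ˢ t))
    (ha : (a : ℕ) + 1 = r) (hb : (b : ℕ) + 2 = r) (haa : c (a, a) = 0)
    (htie : c (a, b) = c (b, a)) (hab : c (a, b) ≠ 0)
    (hΓ : #(t.filter fun γ => colPoly c γ ≠ 0) = m + 1) : m * (m + 2) ≤ gridWeight s t c := by
  have hZ : #(t.filter fun γ => colPoly c γ = 0) = b := by
    have := card_filter_add_card_filter_not (s := t) (p := fun γ => colPoly c γ = 0)
    simp only [ne_eq] at hΓ
    omega
  set Γ := t.filter fun γ => colPoly c γ ≠ 0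
  obtain ⟨P, V, hV, hVdeg, hPdeg, heval⟩ :=
    exists_bivEval_eq_nodal_mul (fun γ hγ => (mem_filter.1 hγ).2) hZ ha hb haa htie hab
  have hΓt : Γ ⊆ t := filter_subset _ t
  calc m * (m + 2)
      ≤ #((s ×ˢ Γ).filter fun z => P.eval z.1 + (z.1 + z.2) * V.eval z.1 ≠ 0) :=
        le_card_filter_ne_zero (by omega) hΓ
          (hinj.mono (coe_subset.2 (product_subset_product_right hΓt))) hV hVdeg hPdeg
    _ = gridWeight s Γ c := by
        refine congrArg card (filter_congr fun z hz => ?_)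
        have hγ : z.2 ∉ t.filter fun γ => colPoly c γ = 0 := fun h =>
          (mem_filter.1 (mem_product.1 hz).2).2 (mem_filter.1 h).2
        rw [heval, mul_ne_zero_iff]
        exact (and_iff_right (eval_nodal_not_at_node fun x hx h => hγ (by rwa [h]))).symm
    _ ≤ gridWeight s t c := gridWeight_mono hΓt

theorem le_gridWeight (hs : #s = m + a) (ht : #t = m + a)
    (hinj : Set.InjOn (fun z : F × F => z.1 + z.2) ↑(s ×ˢ t))
    (ha : (a : ℕ) + 1 = r) (hb : (b : ℕ) + 2 = r) (hc : c ≠ 0) (haa : c (a, a) = 0)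
    (htie : c (a, b) = c (b, a)) : m * (m + 2) ≤ gridWeight s t c := by
  by_cases hab : c (a, b) = 0
  · exact le_gridWeight_of_heavy_eq_zero hs ht ha hb hc haa hab (htie ▸ hab)
  have hrow : rowPoly c a ≠ 0 := fun h => hab (rowPoly_eq_zero_iff.1 h b)
  have hdeg : (rowPoly c a).natDegree < a := natDegree_rowPoly_lt_of_ne_zero hrow fun j hj => by
    obtain rfl : j = a := Fin.ext (by omega)
    exact haa
  have hΓ := card_le_card_filter_colPoly_ne_zero_add (t := t) hrow
  rcases (by omega : #(t.filter fun γ => colPoly c γ ≠ 0) = m + 1 ∨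
      m + 2 ≤ #(t.filter fun γ => colPoly c γ ≠ 0)) with hΓ | hΓ
  · exact le_gridWeight_of_card_filter_colPoly_ne_zero_eq hs ht hinj ha hb haa htie hab hΓ
  calc m * (m + 2) = (m + 2) * m := mul_comm _ _
    _ ≤ #(t.filter fun γ => colPoly c γ ≠ 0) * m := Nat.mul_le_mul_right _ hΓ
    _ ≤ gridWeight s t c := mul_le_gridWeight (filter_subset _ t) fun γ hγ => by
        have := card_le_card_filter_bivEval_ne_zero_add (s := s) (mem_filter.1 hγ).2
        have := natDegree_colPoly_lt c γ (by omega)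
        omega

end LowerBound

section UpperBound

variable {F : Type*} [Field F] {r m : ℕ} {s t : Finset F} {a b : Fin r}

theorem exists_bivEval_eq_mul_mul_add {A B : F[X]} (hA : A.Monic) (hB : B.Monic)
    (hAdeg : A.natDegree = b) (hBdeg : B.natDegree = b) (ha : (a : ℕ) + 1 = r)
    (hb : (b : ℕ) + 2 = r) :
    ∃ c : Fin r × Fin r → F, c (a, a) = 0 ∧ c (a, b) = c (b, a) ∧
      ∀ β γ, bivEval β γ c = A.eval β * B.eval γ * (β + γ) := by
  have hcoeffs (A : F[X]) (hA : A.Monic) (hdeg : A.natDegree = b) : A.natDegree < r ∧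
      (X * A).natDegree < r ∧ (X * A).coeff a = 1 ∧ A.coeff a = 0 ∧ A.coeff b = 1 := by
    refine ⟨by omega, by rw [natDegree_X_mul hA.ne_zero]; omega, ?_,
      coeff_eq_zero_of_natDegree_lt (by omega), hdeg ▸ hA.coeff_natDegree⟩
    rw [show (a : ℕ) = b + 1 by omega, coeff_X_mul, ← hdeg, hA.coeff_natDegree]
  obtain ⟨hA, hXA, hXAa, hAa, hAb⟩ := hcoeffs A hA hAdeg
  obtain ⟨hB, hXB, hXBa, hBa, hBb⟩ := hcoeffs B hB hBdeg
  refine ⟨(fun z => (X * A).coeff z.1 * B.coeff z.2) + fun z => A.coeff z.1 * (X * B).coeff z.2,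
    by simp [hXAa, hAa, hBa, hXBa], by simp [hXAa, hAa, hBa, hXBa, hAb, hBb], fun β γ => ?_⟩
  simp only [map_add, bivEval_coeff_mul_coeff hXA hB, bivEval_coeff_mul_coeff hA hXB, eval_mul,
    eval_X]
  ring

/-- The polynomial vanishes exactly on the rows of `S`, the columns of `T` and at the origin,
the only grid point on the antidiagonal `x + y = 0`. -/
theorem card_filter_eval_nodal_mul_eval_nodal_mul_add_ne_zero {S T : Finset F}
    (hs : #s = m + b + 1) (ht : #t = m + b + 1) (hSs : S ⊆ s.erase 0) (hTt : T ⊆ t.erase 0)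
    (hS : #S = b) (hT : #T = b) (h0s : 0 ∈ s) (h0t : 0 ∈ t)
    (hinj : Set.InjOn (fun z : F × F => z.1 + z.2) ↑(s ×ˢ t)) :
    #((s ×ˢ t).filter fun z => (nodal S id).eval z.1 * (nodal T id).eval z.2 * (z.1 + z.2) ≠ 0)
      = m * (m + 2) := by
  have hsum (β γ) (hβ : β ∈ s) (hγ : γ ∈ t) : β + γ = 0 ↔ (β, γ) = 0 :=
    ⟨fun h => hinj (mem_product.2 ⟨hβ, hγ⟩) (mem_product.2 ⟨h0s, h0t⟩) (by simpa using h),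
      fun h => by simp_all [Prod.ext_iff]⟩
  have hsupport : (s ×ˢ t).filter (fun z =>
      (nodal S id).eval z.1 * (nodal T id).eval z.2 * (z.1 + z.2) ≠ 0) =
      ((s \ S) ×ˢ (t \ T)).erase 0 := by
    ext ⟨β, γ⟩
    simp only [mem_filter, mem_erase, mem_product, mem_sdiff, mul_ne_zero_iff, ne_eq,
      eval_nodal_id_eq_zero_iff]
    constructor
    · rintro ⟨⟨hβ, hγ⟩, ⟨hβS, hγT⟩, hne⟩
      exact ⟨fun h => hne ((hsum β γ hβ hγ).2 h), ⟨hβ, hβS⟩, hγ, hγT⟩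
    · rintro ⟨hne, ⟨hβ, hβS⟩, hγ, hγT⟩
      exact ⟨⟨hβ, hγ⟩, ⟨hβS, hγT⟩, fun h => hne ((hsum β γ hβ hγ).1 h)⟩
  have h0 : (0 : F × F) ∈ (s \ S) ×ˢ (t \ T) := mem_product.2
    ⟨mem_sdiff.2 ⟨h0s, fun h => (mem_erase.1 (hSs h)).1 rfl⟩,
      mem_sdiff.2 ⟨h0t, fun h => (mem_erase.1 (hTt h)).1 rfl⟩⟩
  rw [hsupport, card_erase_of_mem h0, card_product,
    card_sdiff_of_subset (hSs.trans (erase_subset _ _)),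
    card_sdiff_of_subset (hTt.trans (erase_subset _ _)), hs, ht, hS, hT,
    show m + b + 1 - b = m + 1 by omega]
  exact Nat.sub_eq_of_eq_add (by ring)

theorem exists_gridWeight_eq (hs : #s = m + a) (ht : #t = m + a) (h0s : 0 ∈ s) (h0t : 0 ∈ t)
    (hinj : Set.InjOn (fun z : F × F => z.1 + z.2) ↑(s ×ˢ t))
    (ha : (a : ℕ) + 1 = r) (hb : (b : ℕ) + 2 = r) :
    ∃ c : Fin r × Fin r → F, c (a, a) = 0 ∧ c (a, b) = c (b, a) ∧
      gridWeight s t c = m * (m + 2) := by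
  obtain ⟨S, hSs, hS⟩ := exists_subset_card_eq (s := s.erase 0) (n := b)
    (by rw [card_erase_of_mem h0s]; omega)
  obtain ⟨T, hTt, hT⟩ := exists_subset_card_eq (s := t.erase 0) (n := b)
    (by rw [card_erase_of_mem h0t]; omega)
  obtain ⟨c, haa, htie, heval⟩ := exists_bivEval_eq_mul_mul_add (A := nodal S id)
    (B := nodal T id) nodal_monic nodal_monic (by rw [natDegree_nodal, hS])
    (by rw [natDegree_nodal, hT]) ha hb
  refine ⟨c, haa, htie, ?_⟩
  simp only [gridWeight, heval]
  exact card_filter_eval_nodal_mul_eval_nodal_mul_add_ne_zero (by omega) (by omega) hSs hTt hS hT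
    h0s h0t hinj

end UpperBound

section HeavyCoefficients

variable {F : Type*} [Field F] {r : ℕ} {a b : Fin r}

/-- Checks on the coefficients of the heaviest monomials `x ^ a y ^ a`, `x ^ a y ^ b`,
`x ^ b y ^ a`, for `a = r - 1` and `b = r - 2`. -/
noncomputable def heavyParity (a b : Fin r) : (Fin r × Fin r → F) →ₗ[F] F × F :=
  (LinearMap.proj (R := F) (φ := fun _ => F) (a, a)).prod
    (LinearMap.proj (R := F) (φ := fun _ => F) (a, b) - LinearMap.proj (b, a))

theorem mem_ker_heavyParity {c : Fin r × Fin r → F} :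
    c ∈ LinearMap.ker (heavyParity a b) ↔ c (a, a) = 0 ∧ c (a, b) = c (b, a) := by
  simp [heavyParity, sub_eq_zero]

theorem finrank_ker_heavyParity (hab : a ≠ b) :
    Module.finrank F (LinearMap.ker (heavyParity (F := F) a b)) = r ^ 2 - 2 := by
  have hsurj : Function.Surjective (heavyParity (F := F) a b) := fun x =>
    ⟨Pi.single (a, a) x.1 + Pi.single (a, b) x.2, by
      simp [heavyParity, Prod.ext_iff, hab, hab.symm]⟩
  have := LinearMap.finrank_range_add_finrank_ker (heavyParity (F := F) a b)
  rw [LinearMap.range_eq_top.2 hsurj, finrank_top, Module.finrank_prod, Module.finrank_self,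
    Module.finrank_fintype_fun_eq_card, Fintype.card_prod, Fintype.card_fin] at this
  rw [sq]
  omega

theorem bivEval_eq_sum_compl_add {A : Type*} [CommRing A] [Algebra F A] (x y : A)
    (c : Fin r × Fin r → F) (ha : (a : ℕ) + 1 = r) (hb : (b : ℕ) + 2 = r) :
    bivEval x y c = ∑ z ∈ ({(a, a), (a, b), (b, a)} : Finset (Fin r × Fin r))ᶜ,
        c z • (x ^ (z.1 : ℕ) * y ^ (z.2 : ℕ)) +
      x ^ (b : ℕ) * y ^ (b : ℕ) * (c (a, a) • (x * y) + c (a, b) • x + c (b, a) • y) := by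
  have hab : a ≠ b := fun h => by rw [h] at ha; omega
  rw [bivEval_apply, ← sum_compl_add_sum {(a, a), (a, b), (b, a)}, sum_insert (by simp [hab]),
    sum_insert (by simp [hab]), sum_singleton, show (a : ℕ) = b + 1 by omega]
  simp only [Algebra.smul_def, pow_succ]
  ring

theorem add_le_of_notMem_heavy {z : Fin r × Fin r} (ha : (a : ℕ) + 1 = r) (hb : (b : ℕ) + 2 = r)
    (hz : z ∈ ({(a, a), (a, b), (b, a)} : Finset (Fin r × Fin r))ᶜ) :
    (z.1 : ℕ) + z.2 ≤ 2 * b := by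
  by_contra h
  apply mem_compl.1 hz
  have := z.1.isLt
  have := z.2.isLt
  simp only [mem_insert, mem_singleton, Prod.ext_iff, Fin.ext_iff]
  omega

variable {f g : F[X]} {n : ℕ}

theorem natDegree_smul_add_smul_add_smul_le_one_iff (hf : f.natDegree = n)
    (hg : g.natDegree = n) (hn : 2 ≤ n) (hgf : g + f = X) {u v w : F} :
    (u • (g * f) + v • g + w • f).natDegree ≤ 1 ↔ u = 0 ∧ v = w := by
  have hf0 : f ≠ 0 := by rintro rfl; simp at hf; omega
  have hg0 : g ≠ 0 := by rintro rfl; simp at hg; omega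
  have hX : (w • X : F[X]).natDegree ≤ 1 := (natDegree_smul_le _ _).trans natDegree_X_le
  have hsplit : u • (g * f) + v • g + w • f = u • (g * f) + ((v - w) • g + w • X) := by
    rw [← hgf, sub_smul, smul_add]
    abel
  have hlow : ((v - w) • g + w • X).natDegree ≤ n :=
    natDegree_add_le_of_degree_le ((natDegree_smul_le _ _).trans hg.le) (hX.trans (by omega))
  rw [hsplit]
  constructor
  · intro h
    by_cases hu : u = 0
    · refine ⟨hu, sub_eq_zero.1 (by_contra fun hvw => ?_)⟩
      rw [hu, zero_smul, zero_add, natDegree_add_eq_left_of_natDegree_lt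
        (by rw [natDegree_smul _ hvw]; omega), natDegree_smul _ hvw] at h
      omega
    · have hhigh : (u • (g * f)).natDegree = 2 * n := by
        rw [natDegree_smul _ hu, natDegree_mul hg0 hf0, hf, hg]
        ring
      rw [natDegree_add_eq_left_of_natDegree_lt (by omega), hhigh] at h
      omega
  · rintro ⟨rfl, rfl⟩
    simpa using hX

/-- Since `g + f = X`, the three heavy monomials combine to `g ^ b f ^ b (c_aa g f + c_ab g +
c_ba f)`, which has degree at most `2 b n + 1` exactly when both heavy parity checks hold. -/
theorem natDegree_bivEval_le_iff (hf : f.natDegree = n) (hg : g.natDegree = n) (hn : 2 ≤ n)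
    (hgf : g + f = X) (ha : (a : ℕ) + 1 = r) (hb : (b : ℕ) + 2 = r) (c : Fin r × Fin r → F) :
    (bivEval g f c).natDegree ≤ 2 * b * n + 1 ↔ c (a, a) = 0 ∧ c (a, b) = c (b, a) := by
  have hf0 : f ≠ 0 := by rintro rfl; simp at hf; omega
  have hg0 : g ≠ 0 := by rintro rfl; simp at hg; omega
  have hmul : (g ^ (b : ℕ) * f ^ (b : ℕ)).natDegree = 2 * b * n := by
    rw [natDegree_mul (pow_ne_zero _ hg0) (pow_ne_zero _ hf0), natDegree_pow, natDegree_pow, hf, hg]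
    ring
  rw [bivEval_eq_sum_compl_add g f c ha hb, natDegree_add_le_iff_right,
    ← natDegree_smul_add_smul_add_smul_le_one_iff hf hg hn hgf]
  · by_cases h0 : c (a, a) • (g * f) + c (a, b) • g + c (b, a) • f = 0
    · simp [h0]
    rw [natDegree_mul (mul_ne_zero (pow_ne_zero _ hg0) (pow_ne_zero _ hf0)) h0, hmul]
    omega
  refine natDegree_sum_le_of_forall_le _ _ fun z hz => (natDegree_smul_le _ _).trans ?_
  refine natDegree_mul_le.trans ((add_le_add natDegree_pow_le natDegree_pow_le).trans ?_)
  rw [hf, hg, ← add_mul]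
  nlinarith [add_le_of_notMem_heavy ha hb hz]

end HeavyCoefficients

section EvaluationCode

variable {F : Type*} [Field F] {r m : ℕ} {s t : Finset F} {a b : Fin r}

theorem span_Bset_inf_degreeLE {f g : F[X]} {n : ℕ} (hf : f.natDegree = n)
    (hg : g.natDegree = n) (hn : 2 ≤ n) (hgf : g + f = X) (ha : (a : ℕ) + 1 = r)
    (hb : (b : ℕ) + 2 = r) :
    Submodule.span F (Bset f g r) ⊓ degreeLE F ((2 * b * n + 1 : ℕ) : WithBot ℕ) =
      (LinearMap.ker (heavyParity a b)).map (bivEval g f) := by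
  ext w
  simp only [span_Bset, Submodule.mem_inf, LinearMap.mem_range, mem_degreeLE, Submodule.mem_map,
    mem_ker_heavyParity, ← natDegree_le_iff_degree_le]
  constructor
  · rintro ⟨⟨c, rfl⟩, hdeg⟩
    exact ⟨c, (natDegree_bivEval_le_iff hf hg hn hgf ha hb c).1 hdeg, rfl⟩
  · rintro ⟨c, hc, rfl⟩
    exact ⟨⟨c, rfl⟩, (natDegree_bivEval_le_iff hf hg hn hgf ha hb c).2 hc⟩

theorem card_filter_evalOn_ne_zero (hinj : Set.InjOn (fun z : F × F => z.1 + z.2) ↑(s ×ˢ t))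
    (w : F[X]) :
    #(univ.filter fun α : ↥((s ×ˢ t).image fun z : F × F => z.1 + z.2) => evalOn _ w α ≠ 0) =
      #((s ×ˢ t).filter fun z => w.eval (z.1 + z.2) ≠ 0) := by
  refine (card_bij (fun z hz => ⟨z.1 + z.2, mem_image_of_mem _ (mem_filter.1 hz).1⟩)
    (fun z hz => mem_filter.2 ⟨mem_univ _, (mem_filter.1 hz).2⟩)
    (fun z hz z' hz' h => hinj (mem_filter.1 hz).1 (mem_filter.1 hz').1 (congrArg Subtype.val h))
    fun α hα => ?_).symm
  obtain ⟨z, hz, hzα⟩ := mem_image.1 α.2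
  exact ⟨z, mem_filter.2 ⟨hz, hzα ▸ (mem_filter.1 hα).2⟩, Subtype.ext hzα⟩

theorem finrank_map_heavyParity_and_isLeast {x y : F[X]}
    (hxy : ∀ z ∈ s ×ˢ t, x.eval (z.1 + z.2) = z.1 ∧ y.eval (z.1 + z.2) = z.2)
    (hs : #s = m + a) (ht : #t = m + a) (h0s : 0 ∈ s) (h0t : 0 ∈ t)
    (hinj : Set.InjOn (fun z : F × F => z.1 + z.2) ↑(s ×ˢ t))
    (ha : (a : ℕ) + 1 = r) (hb : (b : ℕ) + 2 = r) (hm : 1 ≤ m) :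
    Module.finrank F ((LinearMap.ker (heavyParity a b)).map
      (evalOn ((s ×ˢ t).image fun z : F × F => z.1 + z.2) ∘ₗ bivEval x y)) = r ^ 2 - 2 ∧
    IsLeast {w : ℕ | ∃ v ∈ (LinearMap.ker (heavyParity a b)).map
        (evalOn ((s ×ˢ t).image fun z : F × F => z.1 + z.2) ∘ₗ bivEval x y), v ≠ 0 ∧
        (univ.filter fun α => v α ≠ 0).card = w} (m * (m + 2)) := by
  set Ψ := evalOn ((s ×ˢ t).image fun z : F × F => z.1 + z.2) ∘ₗ bivEval x y
  have hwt (c) : #(univ.filter fun α => Ψ c α ≠ 0) = gridWeight s t c := by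
    rw [LinearMap.comp_apply, card_filter_evalOn_ne_zero hinj, gridWeight]
    exact congrArg card (filter_congr fun z hz => by rw [eval_bivEval, (hxy z hz).1, (hxy z hz).2])
  have hΨ : Function.Injective Ψ := by
    refine LinearMap.ker_eq_bot.1 (LinearMap.ker_eq_bot'.2 fun c hc => ?_)
    refine eq_zero_of_bivEval_eq_zero (s := s) (t := t) (by omega) (by omega) fun β hβ γ hγ => ?_
    have h0 : gridWeight s t c = 0 := by rw [← hwt c, hc]; simp
    rw [gridWeight, card_eq_zero, filter_eq_empty_iff] at h0
    exact not_not.1 (h0 (x := (β, γ)) (mem_product.2 ⟨hβ, hγ⟩))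
  refine ⟨(LinearEquiv.finrank_eq (Submodule.equivMapOfInjective Ψ hΨ _)).symm.trans
    (finrank_ker_heavyParity fun h => by rw [h] at ha; omega), ?_, ?_⟩
  · obtain ⟨c, haa, htie, hc⟩ := exists_gridWeight_eq hs ht h0s h0t hinj ha hb
    refine ⟨Ψ c, ⟨c, mem_ker_heavyParity.2 ⟨haa, htie⟩, rfl⟩, fun h0 => ?_, (hwt c).trans hc⟩
    have := (hwt c).trans hc
    rw [h0] at this
    simp at this
    nlinarith
  · rintro w ⟨_, ⟨c, hc, rfl⟩, hne, rfl⟩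
    obtain ⟨haa, htie⟩ := mem_ker_heavyParity.1 hc
    rw [hwt]
    exact le_gridWeight hs ht hinj ha hb (by rintro rfl; exact hne (map_zero Ψ)) haa htie

end EvaluationCode

theorem stmt_13_general (p e : ℕ) (hp : p.Prime)
    (F : Type*) [Field F] [CharP F p]
    (f : F[X])
    (hflin : ∀ m ∈ f.support, ∃ i : ℕ, m = (p ^ e) ^ i)
    (hdeg : 1 < f.natDegree)
    (ha0 : f.coeff 1 ≠ 0) (ha1 : f.coeff 1 ≠ 1)
    (g : F[X]) (hg : g = X - f)
    (hfs : (f.map (RingHom.id F)).Splits) (hgs : (g.map (RingHom.id F)).Splits)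
    (r : ℕ) (hr : 3 ≤ r) (hrn : r ≤ f.natDegree)
    (C : Submodule F (↥(rootSumSet f g) → F))
    (hC : C = Submodule.map (evalOn (rootSumSet f g))
      (Submodule.span F (Bset f g r) ⊓
        Polynomial.degreeLE F (((2 * r - 4) * f.natDegree + 1 : ℕ) : WithBot ℕ))) :
    Module.finrank F ↥C = r ^ 2 - 2 ∧
    IsLeast {w : ℕ | ∃ v ∈ C, v ≠ 0 ∧
        (Finset.univ.filter fun α : ↥(rootSumSet f g) => v α ≠ 0).card = w}
      ((f.natDegree - r + 1) * (f.natDegree - r + 1 + 2)) := by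
  have := Fact.mk hp
  subst hg
  have hlin : ∀ m ∈ f.support, ∃ k, m = p ^ k :=
    fun m hm => (hflin m hm).elim fun i h => ⟨e * i, h.trans (pow_mul p e i).symm⟩
  have hadd := eval_add_of_forall_mem_support hlin
  have hf' := derivative_eq_C_coeff_one hlin
  have hgdeg : (X - f).natDegree = f.natDegree :=
    natDegree_sub_eq_right_of_natDegree_lt (by rw [natDegree_X]; omega)
  have hcardf := card_roots_toFinset_of_derivative_eq_C (by simpa using hfs) hf' ha0
  have hcardg := card_roots_toFinset_of_derivative_eq_C (by simpa using hgs)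
    (by rw [derivative_sub, derivative_X, hf', ← C_1, ← C_sub]) (sub_ne_zero.2 ha1.symm)
  obtain ⟨hcode, hmin⟩ := finrank_map_heavyParity_and_isLeast (r := r)
    (a := ⟨r - 1, by omega⟩) (b := ⟨r - 2, by omega⟩) (m := f.natDegree - r + 1)
    (eval_add_of_mem_roots hadd) (by dsimp only; omega) (by dsimp only; omega)
    (zero_mem_roots_toFinset hadd (ne_zero_of_natDegree_gt hdeg))
    (zero_mem_roots_toFinset (eval_add_X_sub hadd) (ne_zero_of_natDegree_gt (hgdeg ▸ hdeg)))
    (injOn_add_roots hadd) (by dsimp only; omega) (by dsimp only; omega) (by omega)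
  rw [hC, show 2 * r - 4 = 2 * (r - 2) by omega,
    span_Bset_inf_degreeLE (a := ⟨r - 1, by omega⟩) (b := ⟨r - 2, by omega⟩) rfl hgdeg
      (by omega) (by ring) (by dsimp only; omega) (by dsimp only; omega), ← Submodule.map_comp]
  exact ⟨hcode, hmin⟩

/-- two heavy parities.  Under the construction setup with `3 ≤ r ≤ 𝔫`
and `δ := 𝔫 − r + 1`, the evaluation code on `Z_f ⊕ Z_g` of
`{w ∈ span_F(B_{r²}) : deg w ≤ (2r−4)·𝔫 + 1}` has dimension `r² − 2` and minimum distance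
exactly `δ(δ+2)`. -/
theorem stmt_13 (p e : ℕ) (hp : p.Prime) (he : 0 < e)
    (F : Type*) [Field F] [Fintype F] [CharP F p]
    (f : F[X])
    (hflin : ∀ m ∈ f.support, ∃ i : ℕ, m = (p ^ e) ^ i)
    (hdeg : 1 < f.natDegree)
    (ha0 : f.coeff 1 ≠ 0) (ha1 : f.coeff 1 ≠ 1)
    (g : F[X]) (hg : g = X - f)
    (hfs : (f.map (RingHom.id F)).Splits) (hgs : (g.map (RingHom.id F)).Splits)
    (r : ℕ) (hr : 3 ≤ r) (hrn : r ≤ f.natDegree)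
    (C : Submodule F (↥(rootSumSet f g) → F))
    (hC : C = Submodule.map (evalOn (rootSumSet f g))
      (Submodule.span F (Bset f g r) ⊓
        Polynomial.degreeLE F (((2 * r - 4) * f.natDegree + 1 : ℕ) : WithBot ℕ))) :
    Module.finrank F ↥C = r ^ 2 - 2 ∧
    IsLeast {w : ℕ | ∃ v ∈ C, v ≠ 0 ∧
        (Finset.univ.filter fun α : ↥(rootSumSet f g) => v α ≠ 0).card = w}
      ((f.natDegree - r + 1) * (f.natDegree - r + 1 + 2)) :=
  stmt_13_general p e hp F f hflin hdeg ha0 ha1 g hg hfs hgs r hr hrn C hC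
end

section
/- Let n, r, t be integers with 1 ≤ r ≤ n and 0 ≤ t ≤ 2r − 2, and set k_t := (t+1)·r − ⌊(t+1)/2⌋ · ⌈(t+1)/2⌉ and ∂_{k_t} := t·n + r − 1 − ⌊(t+1)/2⌋. Then, as real numbers, n² − ∂_{k_t} ≥ n² − 2rn(1 − √(1 − k_t/r²)) = ( n − (r − √(r² − k_t)) )² − ( r − √(r² − k_t) )². -/
/-- Let `1 ≤ r ≤ n` and `0 ≤ t ≤ 2r−2` be integers, and set
`k_t := (t+1)·r − ⌊(t+1)/2⌋·⌈(t+1)/2⌉` and `∂_{k_t} := t·n + r − 1 − ⌊(t+1)/2⌋`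
(natural-number arithmetic; note `⌈(t+1)/2⌉ = (t+2)/2`).  Then, as real numbers,
`n² − ∂_{k_t} ≥ n² − 2rn(1 − √(1 − k_t/r²))
             = (n − (r − √(r² − k_t)))² − (r − √(r² − k_t))²`. -/
theorem stmt_15 (n r t : ℕ) (h1 : 1 ≤ r) (hrn : r ≤ n) (ht : t ≤ 2 * r - 2)
    (kt : ℕ) (hkt : kt = (t + 1) * r - ((t + 1) / 2) * ((t + 2) / 2))
    (dkt : ℕ) (hdkt : dkt = t * n + r - 1 - (t + 1) / 2) :
    ((n : ℝ) ^ 2 - (dkt : ℝ) ≥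
      (n : ℝ) ^ 2 - 2 * (r : ℝ) * (n : ℝ) *
        (1 - Real.sqrt (1 - (kt : ℝ) / (r : ℝ) ^ 2))) ∧
    ((n : ℝ) ^ 2 - 2 * (r : ℝ) * (n : ℝ) *
        (1 - Real.sqrt (1 - (kt : ℝ) / (r : ℝ) ^ 2)) =
      ((n : ℝ) - ((r : ℝ) - Real.sqrt ((r : ℝ) ^ 2 - (kt : ℝ)))) ^ 2 -
        ((r : ℝ) - Real.sqrt ((r : ℝ) ^ 2 - (kt : ℝ))) ^ 2) := by
  set a : ℕ := (t + 1) / 2 with ha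
  set b : ℕ := (t + 2) / 2 with hb
  have hab : a + b = t + 1 := by omega
  have har : a + 1 ≤ r := by omega
  have hbr : b ≤ r := by omega
  have hrpos : (0 : ℝ) < r := by exact_mod_cast h1
  have habR : (a : ℝ) + b = (t : ℝ) + 1 := by exact_mod_cast hab
  have hktR : (kt : ℝ) = ((t : ℝ) + 1) * r - a * b := by
    have hle : a * b ≤ (t + 1) * r := Nat.mul_le_mul (by omega) (by omega)
    subst hkt
    push_cast [Nat.cast_sub hle]
    ring
  have hdktR : (dkt : ℝ) = (t : ℝ) * n + r - 1 - a := by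
    have h2 : 1 ≤ t * n + r := by omega
    have h3 : a ≤ t * n + r - 1 := by omega
    subst hdkt
    push_cast [Nat.cast_sub h3, Nat.cast_sub h2]
    ring
  have hfac : (r : ℝ) ^ 2 - kt = ((r : ℝ) - a) * ((r : ℝ) - b) := by
    rw [hktR]; linear_combination (r : ℝ) * habR
  have haR : (a : ℝ) + 1 ≤ r := by exact_mod_cast har
  have hbR : (b : ℝ) ≤ r := by exact_mod_cast hbr
  have hnn : 0 ≤ (r : ℝ) ^ 2 - kt := by
    rw [hfac]; apply mul_nonneg <;> linarith
  set s := Real.sqrt ((r : ℝ) ^ 2 - kt) with hsdef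
  have hs0 : 0 ≤ s := Real.sqrt_nonneg _
  have hs2 : s ^ 2 = (r : ℝ) ^ 2 - kt := Real.sq_sqrt hnn
  have hsb : 2 * s ≤ 2 * (r : ℝ) - ((t : ℝ) + 1) := by
    have h4 : s ≤ (((r : ℝ) - a) + ((r : ℝ) - b)) / 2 := by
      have h5 : (r : ℝ) ^ 2 - kt ≤ ((((r : ℝ) - a) + ((r : ℝ) - b)) / 2) ^ 2 := by
        rw [hfac]; nlinarith [sq_nonneg ((a : ℝ) - b)]
      calc s ≤ Real.sqrt (((((r : ℝ) - a) + ((r : ℝ) - b)) / 2) ^ 2) :=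
            Real.sqrt_le_sqrt h5
        _ = (((r : ℝ) - a) + ((r : ℝ) - b)) / 2 := Real.sqrt_sq (by linarith)
    linarith
  have hsqrt1 : Real.sqrt (1 - (kt : ℝ) / (r : ℝ) ^ 2) = s / r := by
    have he : 1 - (kt : ℝ) / (r : ℝ) ^ 2 = ((r : ℝ) ^ 2 - kt) / (r : ℝ) ^ 2 := by
      field_simp
    rw [he, Real.sqrt_div hnn, Real.sqrt_sq hrpos.le]
  have hexp : 2 * (r : ℝ) * n * (1 - s / r) = 2 * r * n - 2 * n * s := by
    field_simp
  have hnR : (r : ℝ) ≤ n := by exact_mod_cast hrn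
  have ha0 : (0 : ℝ) ≤ a := Nat.cast_nonneg _
  constructor
  · rw [hsqrt1, hexp, hdktR]
    have hn0 : (0 : ℝ) ≤ n := Nat.cast_nonneg _
    have hkey : (n : ℝ) * (2 * s) ≤ (n : ℝ) * (2 * (r : ℝ) - ((t : ℝ) + 1)) :=
      mul_le_mul_of_nonneg_left hsb hn0
    have htn : (t : ℝ) * n ≥ 0 := by positivity
    linarith
  · rw [hsqrt1, hexp]
    ring
end

section
/- Let n, r, t be integers with r ≥ 1, n ≥ 2r, n ≥ 32, and 0 ≤ t ≤ 2r − 2, and set k_t := (t+1)·r − ⌊(t+1)/2⌋ · ⌈(t+1)/2⌉ and ∂_{k_t} := t·n + r − 1 − ⌊(t+1)/2⌋. If k_t ≤ 0.33·r², then n² − ∂_{k_t} ≥ 0.9 · ( ⌈√(r² − k_t + 1)⌉ + n − r )². (Consequently, the minimum distance of the code C_{k_t} from the paper's construction is at least 90% of the upper bound ( ⌈√(r² − k_t + 1)⌉ + n − r )².) -/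
/-!
Write `u = t + 1`. Since `⌊u/2⌋·⌈u/2⌉ ≤ u²/4`, we get `k_t ≥ u·r − u²/4`, so `k_t ≤ 0.33·r²`
forces `u ≤ 0.363·r ≤ 0.1815·n`. The same bound gives `r² − k_t + 1 ≤ (r − u/2)² + 1`, hence
`⌈√(r² − k_t + 1)⌉ + n − r ≤ n − t/2 + 1`, while `∂_{k_t} ≤ t·n + r`. What remains is a quadratic
inequality in `n` and `t`, valid once `t` is a small fraction of `n` and `n ≥ 32`.
-/

theorem Nat.four_mul_half_mul_half_succ_le_sq (m : ℕ) : 4 * (m / 2 * ((m + 1) / 2)) ≤ m ^ 2 := by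
  obtain ⟨q, rfl | rfl⟩ := Nat.even_or_odd' m
  · rw [show (2 * q + 1) / 2 = q by omega, Nat.mul_div_cancel_left q two_pos]
    nlinarith
  · rw [show (2 * q + 1) / 2 = q by omega, show (2 * q + 1 + 1) / 2 = q + 1 by omega]
    nlinarith

theorem cast_mul_sub_half_mul_half_succ_ge (m r : ℕ) :
    (m : ℝ) * r - m ^ 2 / 4 ≤ ((m * r - m / 2 * ((m + 1) / 2) : ℕ) : ℝ) := by
  have hsq := Nat.four_mul_half_mul_half_succ_le_sq m
  generalize m / 2 * ((m + 1) / 2) = p at hsq ⊢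
  have hsub : ((m * r : ℕ) : ℝ) ≤ ((m * r - p : ℕ) : ℝ) + p := by exact_mod_cast le_tsub_add
  have hsq' : (4 * p : ℝ) ≤ (m : ℝ) ^ 2 := by exact_mod_cast hsq
  push_cast at hsub
  linarith

/-- `0.363` rounds up `2 − √2.68`, the smaller root of `x² − 4x + 1.32`. -/
theorem le_of_mul_sub_sq_div_four_le {u r : ℝ} (hu : u ≤ 2 * r)
    (h : u * r - u ^ 2 / 4 ≤ 0.33 * r ^ 2) : u ≤ 0.363 * r := by
  by_contra! hlt
  nlinarith [mul_pos (sub_pos.2 hlt) (show 0 < 3.637 * r - u by linarith)]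

theorem ceil_sqrt_lt_add {y z : ℝ} (hy : 3 / 4 ≤ y) (hz : z ≤ y ^ 2 + 1) :
    (⌈√z⌉ : ℝ) < y + 3 / 2 := by
  have hsqrt : √z ≤ y + 1 / 2 := Real.sqrt_le_iff.2 ⟨by linarith, by nlinarith⟩
  linarith [Int.ceil_lt_add_one (√z)]

theorem nine_tenths_mul_sq_le_sq_sub {n r t : ℝ} (hn : 32 ≤ n) (hrn : 2 * r ≤ n) (ht : 0 ≤ t)
    (htr : t + 1 ≤ 0.363 * r) :
    0.9 * (n - t / 2 + 1) ^ 2 ≤ n ^ 2 - (t * n + r) := by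
  nlinarith [mul_nonneg ht (show 0 ≤ n - 32 by linarith),
    mul_nonneg (show 0 ≤ 0.1815 * n - 1 - t by linarith) (show 0 ≤ n by linarith),
    mul_nonneg (show (0 : ℝ) ≤ n - 32 by linarith) (show 0 ≤ n by linarith)]

/-- Let `r ≥ 1`, `n ≥ 2r`, `n ≥ 32`, `0 ≤ t ≤ 2r−2` be integers, and
set `k_t := (t+1)·r − ⌊(t+1)/2⌋·⌈(t+1)/2⌉` and `∂_{k_t} := t·n + r − 1 − ⌊(t+1)/2⌋`
(natural-number arithmetic; note `⌈(t+1)/2⌉ = (t+2)/2`).  If `k_t ≤ 0.33·r²`, then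
`n² − ∂_{k_t} ≥ 0.9·(⌈√(r² − k_t + 1)⌉ + n − r)²`, as real numbers. -/
theorem stmt_16 (n r t : ℕ) (h1 : 1 ≤ r) (hn2r : 2 * r ≤ n) (hn32 : 32 ≤ n)
    (ht : t ≤ 2 * r - 2)
    (kt : ℕ) (hkt : kt = (t + 1) * r - ((t + 1) / 2) * ((t + 2) / 2))
    (dkt : ℕ) (hdkt : dkt = t * n + r - 1 - (t + 1) / 2)
    (hsmall : (kt : ℝ) ≤ 0.33 * (r : ℝ) ^ 2) :
    (n : ℝ) ^ 2 - (dkt : ℝ) ≥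
      0.9 * ((⌈Real.sqrt ((r : ℝ) ^ 2 - (kt : ℝ) + 1)⌉ : ℝ) + (n : ℝ) - (r : ℝ)) ^ 2 := by
  have hr : (1 : ℝ) ≤ r := by exact_mod_cast h1
  have hrn : 2 * (r : ℝ) ≤ n := by exact_mod_cast hn2r
  have hn : (32 : ℝ) ≤ n := by exact_mod_cast hn32
  have htr : (t : ℝ) + 1 ≤ 2 * r := by exact_mod_cast (by omega : t + 1 ≤ 2 * r)
  have hd : (dkt : ℝ) ≤ t * n + r := by exact_mod_cast (by omega : dkt ≤ t * n + r)
  have hk : ((t : ℝ) + 1) * r - ((t : ℝ) + 1) ^ 2 / 4 ≤ kt := by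
    subst hkt
    exact_mod_cast cast_mul_sub_half_mul_half_succ_ge (t + 1) r
  have htr' : (t : ℝ) + 1 ≤ 0.363 * r := le_of_mul_sub_sq_div_four_le htr (hk.trans hsmall)
  have hceil : (⌈√((r : ℝ) ^ 2 - kt + 1)⌉ : ℝ) < r - ((t : ℝ) + 1) / 2 + 3 / 2 :=
    ceil_sqrt_lt_add (by linarith) (by nlinarith [hk])
  have hceil_nonneg : (0 : ℝ) ≤ ⌈√((r : ℝ) ^ 2 - kt + 1)⌉ := by
    exact_mod_cast Int.ceil_nonneg (Real.sqrt_nonneg _)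
  calc (n : ℝ) ^ 2 - dkt ≥ (n : ℝ) ^ 2 - (t * n + r) := by linarith
    _ ≥ 0.9 * ((n : ℝ) - t / 2 + 1) ^ 2 :=
      nine_tenths_mul_sq_le_sq_sub hn hrn t.cast_nonneg htr'
    _ ≥ _ := by gcongr <;> linarith
end
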